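/- arXiv:2112.09798 — 10 statements merged into one kernel-verified Lean document; each statement's English description precedes it below -/
import Mathlib

section
/- Let N ≥ 1, let K be a field, let u ∈ K be nonzero and set q = u². For an arbitrary family of rational functions φ_{i,ε} ∈ F = K(x_1,…,x_N) (1 ≤ i ≤ N, ε ∈ {+1,−1}) and each n ∈ ℤ, define the K-linear endomorphism D_n of F by D_n(f) = u^{−n} f + Σ_{i=1}^N Σ_{ε=±1} φ_{i,ε} · ( x_i^{nε} · Γ_i^{ε}(f) − u^{−n} f ). Then for every n ∈ ℤ the commutation relation D_n ∘ M_{ê₁} − M_{ê₁} ∘ D_n = (q − 1) D_{n+1} + (q^{−1} − 1) D_{n−1} holds, where M_{ê₁} is multiplication by ê₁ = Σ_{i=1}^N (x_i + x_i^{−1}). (This is the relation [D^{(𝔤)}_{1;n}, ê₁(x)] = (q−1) D^{(𝔤)}_{1;n+1} + (q^{−1}−1) D^{(𝔤)}_{1;n−1} for the translated first Macdonald operators at long labels, valid for arbitrary coefficient functions φ.) -/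
open scoped BigOperators

noncomputable section

/-- The rational function field `K(x_1, …, x_N)`, realized as the fraction field of the
polynomial ring in `N` variables over `K`. -/
abbrev RatFun (N : ℕ) (K : Type*) [Field K] : Type _ :=
  FractionRing (MvPolynomial (Fin N) K)

/-- The generator `x_i` of `K(x_1, …, x_N)`. -/
noncomputable def Xvar (N : ℕ) (K : Type*) [Field K] (i : Fin N) : RatFun N K :=
  algebraMap (MvPolynomial (Fin N) K) (RatFun N K) (MvPolynomial.X i)

/-- The translated first Macdonald-type operator at a long label:
`D_n f = u^{-n} f + ∑_{i=1}^N ∑_{ε=±1} φ_{i,ε} (x_i^{nε} Γ_i^ε f - u^{-n} f)`,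
for an arbitrary family of coefficient functions `φ`. Here `Γ_i` is the `K`-algebra
automorphism with `Γ_i x_j = q^{δ_{ij}} x_j` and `q = u²`. -/
noncomputable def Dlong {N : ℕ} {K : Type*} [Field K]
    (Γ : Fin N → (RatFun N K ≃ₐ[K] RatFun N K)) (φ : Fin N → ℤ → RatFun N K)
    (u : K) (n : ℤ) (f : RatFun N K) : RatFun N K :=
  algebraMap K (RatFun N K) u ^ (-n) * f +
    ∑ i : Fin N, ∑ ε ∈ ({1, -1} : Finset ℤ),
      φ i ε * (Xvar N K i ^ (n * ε) * (Γ i ^ ε) f -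
        algebraMap K (RatFun N K) u ^ (-n) * f)

private lemma aux_X_ne_zero (N : ℕ) (K : Type*) [Field K] (j : Fin N) :
    Xvar N K j ≠ 0 := by
  have h := IsFractionRing.injective (MvPolynomial (Fin N) K) (RatFun N K)
  simpa [Xvar, map_eq_zero_iff _ h] using MvPolynomial.X_ne_zero (R := K) j

/-- Action on `ê₁` of an automorphism scaling `x_j` by `d^{δ_{ij}}`. -/
private lemma aux_psi_e (N : ℕ) (K : Type*) [Field K]
    (Ψ : RatFun N K ≃ₐ[K] RatFun N K)
    (i : Fin N) (d : RatFun N K) (hd : d ≠ 0)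
    (h : ∀ j, Ψ (Xvar N K j) = (if i = j then d else 1) * Xvar N K j) :
    Ψ (∑ j : Fin N, (Xvar N K j + (Xvar N K j)⁻¹)) =
      (∑ j : Fin N, (Xvar N K j + (Xvar N K j)⁻¹)) +
        ((d - 1) * Xvar N K i + (d⁻¹ - 1) * (Xvar N K i)⁻¹) := by
  rw [map_sum]
  have key : ∀ j : Fin N, Ψ (Xvar N K j + (Xvar N K j)⁻¹) =
      (Xvar N K j + (Xvar N K j)⁻¹) +
        (if i = j then (d - 1) * Xvar N K j + (d⁻¹ - 1) * (Xvar N K j)⁻¹ else 0) := by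
    intro j
    rw [map_add, map_inv₀, h j]
    by_cases hij : i = j <;> simp only [hij, if_true, if_pos, if_neg, one_mul,
      mul_inv_rev] <;> [skip; simp]
    field_simp [aux_X_ne_zero N K j, hd]
    ring
  simp only [key, Finset.sum_add_distrib, Finset.sum_ite_eq, Finset.mem_univ, if_true]

private lemma aux_rearrange {R : Type*} [CommRing R] (a b c d e g h k : R)
    (h1 : a - b = 0) (h2 : c + d = 0) (h3 : e - g = h + k) :
    (a + e) - (b + g) = (c + h) + (d + k) := by linear_combination h1 - h2 + h3

private lemma aux_key {R : Type*} [Field R] (U : R) (hU : U ≠ 0) :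
    (U ^ 2 - 1) * U⁻¹ + ((U ^ 2)⁻¹ - 1) * U = 0 := by
  field_simp; ring

private lemma aux_main {R : Type*} [Field R] (U A E g g' p1 p2 f : R) (n : ℤ)
    (hU : U ≠ 0) :
    p1 * (A ^ n * ((E + ((U ^ 2 - 1) * A + ((U ^ 2)⁻¹ - 1) * A⁻¹)) * g) - U ^ (-n) * (E * f)) +
      p2 * (A ^ (-n) * ((E + (((U ^ 2)⁻¹ - 1) * A + (U ^ 2 - 1) * A⁻¹)) * g') -
        U ^ (-n) * (E * f)) -
      (E * (p1 * (A ^ n * g - U ^ (-n) * f)) + E * (p2 * (A ^ (-n) * g' - U ^ (-n) * f))) =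
    (U ^ 2 - 1) * (p1 * (A ^ n * A * g - U ^ (-n) * U⁻¹ * f)) +
      (U ^ 2 - 1) * (p2 * (A ^ (-n) * A⁻¹ * g' - U ^ (-n) * U⁻¹ * f)) +
      ((U ^ 2)⁻¹ - 1) * (p1 * (A ^ n * A⁻¹ * g - U ^ (-n) * U * f)) +
      ((U ^ 2)⁻¹ - 1) * (p2 * (A ^ (-n) * A * g' - U ^ (-n) * U * f)) := by
  linear_combination ((p1 + p2) * (U ^ (-n)) * f) * aux_key U hU

private lemma aux_scalar {R : Type*} [Field R] (U b f : R) (hU : U ≠ 0) :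
    (U ^ 2 - 1) * (b * U⁻¹ * f) + ((U ^ 2)⁻¹ - 1) * (b * U * f) = 0 := by
  linear_combination (b * f) * aux_key U hU

set_option maxHeartbeats 1000000 in
/-- The commutation relation
`[D_n, ê₁(x)] = (q - 1) D_{n+1} + (q^{-1} - 1) D_{n-1}`
with `ê₁ = ∑ᵢ (xᵢ + xᵢ⁻¹)` and `q = u²`, valid for arbitrary coefficient functions `φ`. -/
theorem commutation_first_Pieri_long
    (N : ℕ) (hN : 1 ≤ N) (K : Type*) [Field K] (u : K) (hu : u ≠ 0)
    (Γ : Fin N → (RatFun N K ≃ₐ[K] RatFun N K))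
    (hΓ : ∀ i j : Fin N,
      Γ i (Xvar N K j) =
        (if i = j then algebraMap K (RatFun N K) (u ^ 2) else 1) * Xvar N K j)
    (φ : Fin N → ℤ → RatFun N K) (n : ℤ) (f : RatFun N K) :
    Dlong Γ φ u n ((∑ i : Fin N, (Xvar N K i + (Xvar N K i)⁻¹)) * f) -
        (∑ i : Fin N, (Xvar N K i + (Xvar N K i)⁻¹)) * Dlong Γ φ u n f =
      (algebraMap K (RatFun N K) (u ^ 2) - 1) * Dlong Γ φ u (n + 1) f +
        ((algebraMap K (RatFun N K) (u ^ 2))⁻¹ - 1) * Dlong Γ φ u (n - 1) f := by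
  have hU : algebraMap K (RatFun N K) u ≠ 0 := by simpa using hu
  have hq : algebraMap K (RatFun N K) (u ^ 2) = algebraMap K (RatFun N K) u ^ 2 :=
    map_pow _ _ _
  have hq0 : algebraMap K (RatFun N K) u ^ 2 ≠ 0 := pow_ne_zero _ hU
  have hGe : ∀ i, (Γ i) (∑ j : Fin N, (Xvar N K j + (Xvar N K j)⁻¹)) =
      (∑ j : Fin N, (Xvar N K j + (Xvar N K j)⁻¹)) +
        ((algebraMap K (RatFun N K) u ^ 2 - 1) * Xvar N K i +
          ((algebraMap K (RatFun N K) u ^ 2)⁻¹ - 1) * (Xvar N K i)⁻¹) := by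
    intro i
    exact aux_psi_e N K (Γ i) i _ hq0 (by intro j; rw [hΓ i j, hq])
  have hGinv : ∀ i j, ((Γ i)⁻¹ : RatFun N K ≃ₐ[K] RatFun N K) (Xvar N K j) =
      (if i = j then (algebraMap K (RatFun N K) u ^ 2)⁻¹ else 1) * Xvar N K j := by
    intro i j
    show (Γ i).symm (Xvar N K j) = _
    rw [AlgEquiv.symm_apply_eq]
    by_cases hij : i = j
    · rw [if_pos hij, map_mul, hΓ i j, if_pos hij, hq, map_inv₀, ← hq,
        AlgEquiv.commutes, hq]
      field_simp
    · rw [if_neg hij, one_mul, hΓ i j, if_neg hij, one_mul]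
  have hGe' : ∀ i, ((Γ i)⁻¹ : RatFun N K ≃ₐ[K] RatFun N K)
        (∑ j : Fin N, (Xvar N K j + (Xvar N K j)⁻¹)) =
      (∑ j : Fin N, (Xvar N K j + (Xvar N K j)⁻¹)) +
        (((algebraMap K (RatFun N K) u ^ 2)⁻¹ - 1) * Xvar N K i +
          (algebraMap K (RatFun N K) u ^ 2 - 1) * (Xvar N K i)⁻¹) := by
    intro i
    have := aux_psi_e N K ((Γ i)⁻¹) i _ (inv_ne_zero hq0) (hGinv i)
    rwa [inv_inv] at this
  simp only [Dlong, Finset.sum_pair (show (1:ℤ) ≠ -1 by decide), zpow_one, zpow_neg_one,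
    mul_one, mul_neg_one]
  simp only [map_mul, hGe, hGe', hq]
  simp only [mul_add, Finset.mul_sum]
  refine aux_rearrange _ _ _ _ _ _ _ _ (by ring) ?_ ?_
  · simp only [show -(n + 1) = -n + -1 by ring, show -(n - 1) = -n + 1 by ring,
      zpow_add₀ hU, zpow_one, zpow_neg_one]
    exact aux_scalar _ (algebraMap K (RatFun N K) u ^ (-n)) f hU
  · rw [← Finset.sum_sub_distrib, ← Finset.sum_add_distrib]
    refine Finset.sum_congr rfl fun i _ => ?_
    have hXi : Xvar N K i ≠ 0 := aux_X_ne_zero N K i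
    simp only [show -(n + 1) = -n + -1 by ring, show -(n - 1) = -n + 1 by ring,
      show n - 1 = n + -1 by ring, show -(n + -1) = -n + 1 by ring,
      zpow_add₀ hU, zpow_add₀ hXi, zpow_one, zpow_neg_one]
    linear_combination aux_main (algebraMap K (RatFun N K) u) (Xvar N K i)
      (∑ j : Fin N, (Xvar N K j + (Xvar N K j)⁻¹)) ((Γ i) f)
      (((Γ i)⁻¹ : RatFun N K ≃ₐ[K] RatFun N K) f) (φ i 1) (φ i (-1)) f n hU
end
end

section
/- Let R be a commutative ring and u_1, u_2, u_3, … elements of R. For all integers n ≥ 1 and 0 ≤ r ≤ n, the alternating sum θ_{r,n}(u) := Σ_{ℓ=0}^{r} (−1)^ℓ · e_{r−ℓ}(u_1,…,u_{n−ℓ}) · h_ℓ(u_1,…,u_{n−ℓ+1}) equals 1 if r = 0 and equals 0 if r ≥ 1. -/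
open scoped BigOperators

noncomputable section

/-- The elementary symmetric polynomial `e_k` of the family `(u_i)_{i ∈ s}`:
`e_k = ∑_{S ⊆ s, |S| = k} ∏_{i ∈ S} u_i` (so `e_0 = 1` and `e_k = 0` for `k > |s|`). -/
def esym {R : Type*} [CommRing R] (k : ℕ) (s : Finset ℕ) (u : ℕ → R) : R :=
  ∑ S ∈ Finset.powersetCard k s, ∏ i ∈ S, u i

/-- The complete homogeneous symmetric polynomial `h_k` of the family `(u_i)_{i ∈ s}`:
the sum over all multisets of cardinality `k` with entries in `s` of the corresponding
monomials (so `h_0 = 1`). -/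
def hsym {R : Type*} [CommRing R] (k : ℕ) (s : Finset ℕ) (u : ℕ → R) : R :=
  ∑ m ∈ s.sym k, ((m : Multiset ℕ).map u).prod

section Aux

variable {R : Type*} [CommRing R] (u : ℕ → R)

lemma esym_zero (s : Finset ℕ) : esym 0 s u = 1 := by
  simp [esym]

lemma hsym_zero (s : Finset ℕ) : hsym 0 s u = 1 := by
  rw [hsym, Finset.sym_zero, Finset.sum_singleton]
  show ((0 : Multiset ℕ).map u).prod = 1
  simp

lemma esym_eq_zero {k : ℕ} {s : Finset ℕ} (h : s.card < k) : esym k s u = 0 := by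
  rw [esym, Finset.powersetCard_eq_empty.2 h, Finset.sum_empty]

lemma hsym_empty (k : ℕ) : hsym (k + 1) (∅ : Finset ℕ) u = 0 := by
  simp [hsym]

lemma esym_insert {a : ℕ} {s : Finset ℕ} (h : a ∉ s) (k : ℕ) :
    esym (k + 1) (insert a s) u = esym (k + 1) s u + u a * esym k s u := by
  rw [esym, Finset.powersetCard_succ_insert h, Finset.sum_union, Finset.sum_image]
  · rw [esym, esym, Finset.mul_sum]
    congr 1
    refine Finset.sum_congr rfl fun S hS => ?_
    rw [Finset.prod_insert fun hin => h ((Finset.mem_powersetCard.1 hS).1 hin)]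
  · intro S hS T hT hST
    have hS' : a ∉ S := fun hin => h ((Finset.mem_powersetCard.1 hS).1 hin)
    have hT' : a ∉ T := fun hin => h ((Finset.mem_powersetCard.1 hT).1 hin)
    have := congrArg (Finset.erase · a) hST
    simpa [Finset.erase_insert hS', Finset.erase_insert hT'] using this
  · rw [Finset.disjoint_right]
    rintro S hS hS'
    obtain ⟨T, hT, rfl⟩ := Finset.mem_image.1 hS
    exact absurd ((Finset.mem_powersetCard.1 hS').1 (Finset.mem_insert_self a T)) h

lemma sym_insert_eq {a : ℕ} {s : Finset ℕ} (h : a ∉ s) (k : ℕ) :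
    (insert a s).sym (k + 1) =
      s.sym (k + 1) ∪ ((insert a s).sym k).image (fun m => a ::ₛ m) := by
  ext m
  simp only [Finset.mem_union, Finset.mem_sym_iff, Finset.mem_image, Finset.mem_insert]
  constructor
  · intro hm
    by_cases ha : a ∈ m
    · obtain ⟨t, rfl⟩ := Sym.exists_cons_of_mem ha
      exact Or.inr ⟨t, fun b hb => hm b (Sym.mem_cons_of_mem hb), rfl⟩
    · exact Or.inl fun b hb => (hm b hb).resolve_left fun e => ha (e ▸ hb)
  · rintro (hm | ⟨t, ht, rfl⟩)
    · exact fun b hb => Or.inr (hm b hb)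
    · intro b hb
      rcases Sym.mem_cons.1 hb with rfl | hb
      · exact Or.inl rfl
      · rcases ht b hb with e | hbs
        · exact Or.inl e
        · exact Or.inr hbs

lemma hsym_insert {a : ℕ} {s : Finset ℕ} (h : a ∉ s) (k : ℕ) :
    hsym (k + 1) (insert a s) u = hsym (k + 1) s u + u a * hsym k (insert a s) u := by
  rw [hsym, sym_insert_eq h, Finset.sum_union, Finset.sum_image]
  · rw [hsym, hsym, Finset.mul_sum]
    congr 1
    refine Finset.sum_congr rfl fun m hm => ?_
    rw [Sym.coe_cons, Multiset.map_cons, Multiset.prod_cons]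
  · intro x _ y _ hxy
    exact (Sym.cons_inj_right a x y).1 hxy
  · rw [Finset.disjoint_right]
    rintro m hm hm'
    obtain ⟨t, ht, rfl⟩ := Finset.mem_image.1 hm
    exact h (Finset.mem_sym_iff.1 hm' a (Sym.mem_cons_self a t))

lemma Icc_one_succ (m : ℕ) : Finset.Icc 1 (m + 1) = insert (m + 1) (Finset.Icc 1 m) := by
  ext x
  simp only [Finset.mem_Icc, Finset.mem_insert]
  omega

lemma succ_not_mem_Icc (m : ℕ) : m + 1 ∉ Finset.Icc 1 m := by
  simp

lemma theta_eq (n r : ℕ) (hr1 : 1 ≤ r) (hr : r ≤ n) :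
    (∑ ℓ ∈ Finset.range (r + 1),
        (-1 : R) ^ ℓ * esym (r - ℓ) (Finset.Icc 1 (n - ℓ)) u *
          hsym ℓ (Finset.Icc 1 (n - ℓ + 1)) u) =
    (∑ j ∈ Finset.range r,
        (-1 : R) ^ j * esym (r - j) (Finset.Icc 1 (n - 1 - j)) u *
          hsym j (Finset.Icc 1 (n - j)) u)
      + (-1 : R) ^ r * hsym r (Finset.Icc 1 (n - r)) u := by
  set W : ℕ → R := fun j =>
    (-1 : R) ^ j * esym (r - j) (Finset.Icc 1 (n - j)) u *
      hsym j (Finset.Icc 1 (n - j)) u with hW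
  set Z : ℕ → R := fun j =>
    (-1 : R) ^ j * esym (r - j) (Finset.Icc 1 (n - 1 - j)) u *
      hsym j (Finset.Icc 1 (n - j)) u with hZ
  have key : ∀ ℓ ∈ Finset.range r,
      (-1 : R) ^ (ℓ + 1) * esym (r - (ℓ + 1)) (Finset.Icc 1 (n - (ℓ + 1))) u *
          hsym (ℓ + 1) (Finset.Icc 1 (n - (ℓ + 1) + 1)) u
        = (W (ℓ + 1) - W ℓ) + Z ℓ := by
    intro ℓ hℓ
    rw [Finset.mem_range] at hℓ
    have h3 : n - ℓ = (n - (ℓ + 1)) + 1 := by omega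
    have h4 : n - 1 - ℓ = n - (ℓ + 1) := by omega
    have h2 : r - ℓ = (r - (ℓ + 1)) + 1 := by omega
    rw [hW, hZ]
    simp only [h3, h4, h2]
    set m := n - (ℓ + 1)
    rw [Icc_one_succ m, esym_insert u (succ_not_mem_Icc m), hsym_insert u (succ_not_mem_Icc m)]
    ring
  rw [Finset.sum_range_succ', Finset.sum_congr rfl key, Finset.sum_add_distrib,
    Finset.sum_range_sub W]
  have hW0 : (-1 : R) ^ 0 * esym (r - 0) (Finset.Icc 1 (n - 0)) u *
      hsym 0 (Finset.Icc 1 (n - 0 + 1)) u = W 0 := by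
    rw [hW]
    simp [hsym_zero]
  have hWr : W r = (-1 : R) ^ r * hsym r (Finset.Icc 1 (n - r)) u := by
    rw [hW]
    simp only [Nat.sub_self, esym_zero, mul_one]
  rw [hW0, hWr]
  ring

lemma theta_zero : ∀ n r : ℕ, 1 ≤ r → r ≤ n →
    (∑ ℓ ∈ Finset.range (r + 1),
        (-1 : R) ^ ℓ * esym (r - ℓ) (Finset.Icc 1 (n - ℓ)) u *
          hsym ℓ (Finset.Icc 1 (n - ℓ + 1)) u) = 0 := by
  intro n
  induction n with
  | zero => intro r h1 h2; omega
  | succ m ih =>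
    intro r hr1 hr
    rw [theta_eq u (m + 1) r hr1 hr]
    rcases Nat.lt_or_ge r (m + 1) with h | h
    · -- r ≤ m : use the induction hypothesis
      have hterm : ∀ j ∈ Finset.range r,
          (-1 : R) ^ j * esym (r - j) (Finset.Icc 1 (m + 1 - 1 - j)) u *
            hsym j (Finset.Icc 1 (m + 1 - j)) u
          = (-1 : R) ^ j * esym (r - j) (Finset.Icc 1 (m - j)) u *
            hsym j (Finset.Icc 1 (m - j + 1)) u := by
        intro j hj
        rw [Finset.mem_range] at hj
        have e1 : m + 1 - 1 - j = m - j := by omega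
        have e2 : m + 1 - j = m - j + 1 := by omega
        rw [e1, e2]
      rw [Finset.sum_congr rfl hterm]
      have hIH := ih r hr1 (by omega)
      rw [Finset.sum_range_succ] at hIH
      have e3 : m + 1 - r = m - r + 1 := by omega
      rw [e3]
      have e4 : r - r = 0 := by omega
      rw [e4, esym_zero] at hIH
      rw [mul_one] at hIH
      linear_combination hIH
    · -- r = m + 1 : all terms vanish
      have hrm : r = m + 1 := by omega
      subst hrm
      rw [Nat.sub_self]
      have hIcc : Finset.Icc 1 0 = (∅ : Finset ℕ) := by simp
      rw [hIcc]
      rw [hsym_empty u m, mul_zero, add_zero]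
      refine Finset.sum_eq_zero fun j hj => ?_
      rw [Finset.mem_range] at hj
      have hcard : (Finset.Icc 1 (m + 1 - 1 - j)).card < m + 1 - j := by
        rw [Nat.card_Icc]
        omega
      rw [esym_eq_zero u hcard, mul_zero, zero_mul]

end Aux

/-- For all `n ≥ 1` and `0 ≤ r ≤ n`, the alternating sum
`θ_{r,n}(u) = ∑_{ℓ=0}^{r} (-1)^ℓ e_{r-ℓ}(u_1,…,u_{n-ℓ}) h_ℓ(u_1,…,u_{n-ℓ+1})`
equals `1` if `r = 0` and `0` if `r ≥ 1`. -/
theorem theta_vanishing {R : Type*} [CommRing R] (u : ℕ → R) (n r : ℕ)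
    (hn : 1 ≤ n) (hr : r ≤ n) :
    ∑ ℓ ∈ Finset.range (r + 1),
        (-1 : R) ^ ℓ * esym (r - ℓ) (Finset.Icc 1 (n - ℓ)) u *
          hsym ℓ (Finset.Icc 1 (n - ℓ + 1)) u =
      if r = 0 then 1 else 0 := by
  rcases Nat.eq_zero_or_pos r with rfl | hr1
  · simp [esym_zero, hsym_zero]
  · rw [if_neg (by omega)]
    exact theta_zero u n r hr1 hr
end
end

section
/- Let N ≥ 1, q ∈ ℂ∖{0} and Λ_1,…,Λ_N ∈ ℂ∖{0}. As the real parameter t → +∞: (i) for each 2 ≤ i ≤ N the coefficient ∏_{j<i} [ (t^{j−i+1} Λ_i − Λ_j)/(t^{j−i} Λ_i − Λ_j) ] · [ (Λ_j − q t^{j−i−1} Λ_i)/(Λ_j − q t^{j−i} Λ_i) ] tends to 1 − Λ_i/Λ_{i−1}; (ii) for each 1 ≤ i ≤ N−1 the coefficient [ (1 − t^{N−i} Λ_i)/(1 − t^{N+1−i} Λ_i) ] · [ (t^{N+2−i} Λ_i − q)/(t^{N+1−i} Λ_i − q) ] · ∏_{j>i} [ (t^{j−i+1} Λ_i − q Λ_j)/(t^{j−i}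 Λ_i − q Λ_j) ] · [ (Λ_j − t^{j−i−1} Λ_i)/(Λ_j − t^{j−i} Λ_i) ] · ∏_{j≠i} [ (1 − t^{2N+1−i−j} Λ_i Λ_j)/(1 − t^{2N+2−i−j} Λ_i Λ_j) ] · [ (t^{2N+3−i−j} Λ_i Λ_j − q)/(t^{2N+2−i−j} Λ_i Λ_j − q) ] tends to 1 − Λ_{i+1}/Λ_i; and (iii) for i = N the analogous coefficient [ (1 − Λ_N)/(1 − t Λ_N) ] · [ (t² Λ_N − q)/(t Λ_N − q) ] · ∏_{j≠N} [ (1 − t^{N+1−j} Λ_N Λ_j)/(1 − t^{N+2−j} Λ_N Λ_j) ] · [ (t^{N+3−j} Λ_N Λ_j − q)/(t^{N+2−j} Λ_N Λ_j − q) ] tends to 1 − 1/Λ_N. Consequently the first Pieri operator 𝓗_1^{(C_N^{(1)})}(Λ; q, t) converges coefficientwise as t → ∞ to the relativistic q-difference Toda Hamiltonian H_1^{(C_N^{(1)})}(Λ) = T_1 + Σ_{i=2}^N (1 − Λ_i/Λ_{i−1}) T_i + Σ_{i=1}^{N−1} (1 − Λ_{i+1}/Λ_i) T_i^{−1} + (1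 − 1/Λ_N) T_N^{−1}. -/
open scoped BigOperators Topology
open Filter

noncomputable section

namespace PieriWhittakerAux

lemma zpow_tendsto_zero {e : ℤ} (he : e < 0) :
    Tendsto (fun t : ℝ => (t : ℂ) ^ e) atTop (𝓝 0) := by
  have h : Tendsto (fun t : ℝ => t ^ e) atTop (𝓝 (0:ℝ)) := tendsto_zpow_atTop_zero he
  have h2 := (Complex.continuous_ofReal.tendsto 0).comp h
  simpa [Function.comp_def, Complex.ofReal_zpow] using h2

lemma keylim (a b : ℂ) {e d : ℤ} (hed : e ≤ d) (hd : 0 ≤ d) :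
    Tendsto (fun t : ℝ => (t : ℂ) ^ (-d) * ((t : ℂ) ^ e * a + b)) atTop
      (𝓝 ((if e = d then a else 0) + (if d = 0 then b else 0))) := by
  have h1 : Tendsto (fun t : ℝ => (t : ℂ) ^ (e - d) * a) atTop
      (𝓝 (if e = d then a else 0)) := by
    rcases eq_or_lt_of_le hed with h | h
    · simp [h]
    · rw [if_neg h.ne]
      simpa using (zpow_tendsto_zero (e := e - d) (by omega)).mul_const a
  have h2 : Tendsto (fun t : ℝ => (t : ℂ) ^ (-d) * b) atTop
      (𝓝 (if d = 0 then b else 0)) := by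
    rcases eq_or_lt_of_le hd with h | h
    · simp [← h]
    · rw [if_neg (by omega)]
      simpa using (zpow_tendsto_zero (e := -d) (by omega)).mul_const b
  refine (h1.add h2).congr' ?_
  filter_upwards [eventually_gt_atTop 0] with t ht
  have htne : (t : ℂ) ≠ 0 := by exact_mod_cast ht.ne'
  rw [mul_add, ← mul_assoc, ← zpow_add₀ htne, add_comm (-d) e, ← sub_eq_add_neg]

lemma fac (a b : ℂ) {e d : ℤ} (L : ℂ) (hed : e ≤ d) (hd : 0 ≤ d)
    (hL : ((if e = d then a else 0) + (if d = 0 then b else 0)) = L) :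
    Tendsto (fun t : ℝ => (t : ℂ) ^ (-d) * ((t : ℂ) ^ e * a + b)) atTop (𝓝 L) :=
  hL ▸ keylim a b hed hd

lemma ratio1 {f g : ℝ → ℂ} {d : ℤ} {A B : ℂ}
    (hf : Tendsto (fun t : ℝ => (t : ℂ) ^ (-d) * f t) atTop (𝓝 A))
    (hg : Tendsto (fun t : ℝ => (t : ℂ) ^ (-d) * g t) atTop (𝓝 B)) (hB : B ≠ 0) :
    Tendsto (fun t : ℝ => f t / g t) atTop (𝓝 (A / B)) := by
  refine (hf.div hg hB).congr' ?_
  filter_upwards [eventually_gt_atTop 0] with t ht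
  have htne : (t : ℂ) ^ (-d) ≠ 0 := zpow_ne_zero _ (by exact_mod_cast ht.ne')
  simp only [Pi.div_apply]
  rw [mul_div_mul_left _ _ htne]

lemma mulscale {f₁ f₂ : ℝ → ℂ} {d₁ d₂ : ℤ} {A₁ A₂ : ℂ}
    (hf₁ : Tendsto (fun t : ℝ => (t : ℂ) ^ (-d₁) * f₁ t) atTop (𝓝 A₁))
    (hf₂ : Tendsto (fun t : ℝ => (t : ℂ) ^ (-d₂) * f₂ t) atTop (𝓝 A₂)) :
    Tendsto (fun t : ℝ => (t : ℂ) ^ (-(d₁ + d₂)) * (f₁ t * f₂ t)) atTop (𝓝 (A₁ * A₂)) := by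
  refine (hf₁.mul hf₂).congr' ?_
  filter_upwards [eventually_gt_atTop 0] with t ht
  have htne : (t : ℂ) ≠ 0 := by exact_mod_cast ht.ne'
  rw [neg_add, zpow_add₀ htne]
  ring

lemma ratio2 {f₁ g₁ f₂ g₂ : ℝ → ℂ} {df₁ df₂ dg₁ dg₂ : ℤ} {A₁ B₁ A₂ B₂ : ℂ}
    (hd : df₁ + df₂ = dg₁ + dg₂)
    (hf₁ : Tendsto (fun t : ℝ => (t : ℂ) ^ (-df₁) * f₁ t) atTop (𝓝 A₁))
    (hf₂ : Tendsto (fun t : ℝ => (t : ℂ) ^ (-df₂) * f₂ t) atTop (𝓝 A₂))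
    (hg₁ : Tendsto (fun t : ℝ => (t : ℂ) ^ (-dg₁) * g₁ t) atTop (𝓝 B₁))
    (hg₂ : Tendsto (fun t : ℝ => (t : ℂ) ^ (-dg₂) * g₂ t) atTop (𝓝 B₂))
    (hB : B₁ * B₂ ≠ 0) :
    Tendsto (fun t : ℝ => f₁ t / g₁ t * (f₂ t / g₂ t)) atTop
      (𝓝 (A₁ * A₂ / (B₁ * B₂))) := by
  have hf := mulscale hf₁ hf₂
  have hg := mulscale hg₁ hg₂
  rw [← hd] at hg
  exact (ratio1 hf hg hB).congr fun t => (div_mul_div_comm _ _ _ _).symm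

end PieriWhittakerAux

open PieriWhittakerAux

/-- The q-Whittaker limit `t → ∞` of the coefficients of the first Pieri operator
`𝓗_1^{(C_N^{(1)})}(Λ; q, t)` for `C_N^{(1)}`-Macdonald polynomials:
(i) the coefficient of `T_i` (`2 ≤ i ≤ N`) tends to `1 - Λ_i/Λ_{i-1}`;
(ii) the coefficient of `T_i⁻¹` (`1 ≤ i ≤ N-1`) tends to `1 - Λ_{i+1}/Λ_i`;
(iii) the coefficient of `T_N⁻¹` tends to `1 - 1/Λ_N`.
Consequently `𝓗_1^{(C_N^{(1)})}` converges coefficientwise to the relativistic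
q-difference Toda Hamiltonian
`H_1^{(C_N^{(1)})} = T_1 + ∑_{i=2}^N (1 - Λ_i/Λ_{i-1}) T_i
  + ∑_{i=1}^{N-1} (1 - Λ_{i+1}/Λ_i) T_i⁻¹ + (1 - 1/Λ_N) T_N⁻¹`. -/
theorem pieri_whittaker_limit_C (N : ℕ) (hN : 1 ≤ N) (q : ℂ) (hq : q ≠ 0)
    (Λ : ℕ → ℂ) (hΛ : ∀ i ∈ Finset.Icc 1 N, Λ i ≠ 0) :
    (∀ i : ℕ, 2 ≤ i → i ≤ N →
      Tendsto (fun t : ℝ =>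
          ∏ j ∈ Finset.Ico 1 i,
            (((t : ℂ) ^ ((j : ℤ) - (i : ℤ) + 1) * Λ i - Λ j) /
                ((t : ℂ) ^ ((j : ℤ) - (i : ℤ)) * Λ i - Λ j)) *
              ((Λ j - q * (t : ℂ) ^ ((j : ℤ) - (i : ℤ) - 1) * Λ i) /
                (Λ j - q * (t : ℂ) ^ ((j : ℤ) - (i : ℤ)) * Λ i)))
        atTop (𝓝 (1 - Λ i / Λ (i - 1)))) ∧
    (∀ i : ℕ, 1 ≤ i → i ≤ N - 1 →
      Tendsto (fun t : ℝ =>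
          ((1 - (t : ℂ) ^ ((N : ℤ) - (i : ℤ)) * Λ i) /
              (1 - (t : ℂ) ^ ((N : ℤ) + 1 - (i : ℤ)) * Λ i)) *
            (((t : ℂ) ^ ((N : ℤ) + 2 - (i : ℤ)) * Λ i - q) /
              ((t : ℂ) ^ ((N : ℤ) + 1 - (i : ℤ)) * Λ i - q)) *
            (∏ j ∈ Finset.Icc (i + 1) N,
              (((t : ℂ) ^ ((j : ℤ) - (i : ℤ) + 1) * Λ i - q * Λ j) /
                  ((t : ℂ) ^ ((j : ℤ) - (i : ℤ)) * Λ i - q * Λ j)) *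
                ((Λ j - (t : ℂ) ^ ((j : ℤ) - (i : ℤ) - 1) * Λ i) /
                  (Λ j - (t : ℂ) ^ ((j : ℤ) - (i : ℤ)) * Λ i))) *
            (∏ j ∈ (Finset.Icc 1 N).erase i,
              ((1 - (t : ℂ) ^ (2 * (N : ℤ) + 1 - (i : ℤ) - (j : ℤ)) * Λ i * Λ j) /
                  (1 - (t : ℂ) ^ (2 * (N : ℤ) + 2 - (i : ℤ) - (j : ℤ)) * Λ i * Λ j)) *
                (((t : ℂ) ^ (2 * (N : ℤ) + 3 - (i : ℤ) - (j : ℤ)) * Λ i * Λ j - q) /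
                  ((t : ℂ) ^ (2 * (N : ℤ) + 2 - (i : ℤ) - (j : ℤ)) * Λ i * Λ j - q))))
        atTop (𝓝 (1 - Λ (i + 1) / Λ i))) ∧
    Tendsto (fun t : ℝ =>
        ((1 - Λ N) / (1 - (t : ℂ) * Λ N)) *
          (((t : ℂ) ^ 2 * Λ N - q) / ((t : ℂ) * Λ N - q)) *
          ∏ j ∈ (Finset.Icc 1 N).erase N,
            ((1 - (t : ℂ) ^ ((N : ℤ) + 1 - (j : ℤ)) * Λ N * Λ j) /
                (1 - (t : ℂ) ^ ((N : ℤ) + 2 - (j : ℤ)) * Λ N * Λ j)) *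
              (((t : ℂ) ^ ((N : ℤ) + 3 - (j : ℤ)) * Λ N * Λ j - q) /
                ((t : ℂ) ^ ((N : ℤ) + 2 - (j : ℤ)) * Λ N * Λ j - q)))
      atTop (𝓝 (1 - 1 / Λ N)) := by
  refine ⟨?_, ?_, ?_⟩
  · -- Part (i)
    intro i hi2 hiN
    have key : Tendsto (fun t : ℝ =>
        ∏ j ∈ Finset.Ico 1 i,
          (((t : ℂ) ^ ((j : ℤ) - (i : ℤ) + 1) * Λ i - Λ j) /
              ((t : ℂ) ^ ((j : ℤ) - (i : ℤ)) * Λ i - Λ j)) *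
            ((Λ j - q * (t : ℂ) ^ ((j : ℤ) - (i : ℤ) - 1) * Λ i) /
              (Λ j - q * (t : ℂ) ^ ((j : ℤ) - (i : ℤ)) * Λ i)))
        atTop (𝓝 (∏ j ∈ Finset.Ico 1 i,
          if j = i - 1 then 1 - Λ i / Λ (i - 1) else 1)) := by
      refine tendsto_finset_prod _ ?_
      intro j hj
      rw [Finset.mem_Ico] at hj
      obtain ⟨hj1, hj2⟩ := hj
      have hΛj : Λ j ≠ 0 := hΛ j (Finset.mem_Icc.mpr ⟨hj1, by omega⟩)
      have hf₂ : Tendsto (fun t : ℝ => (t : ℂ) ^ (-(0:ℤ)) *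
          (Λ j - q * (t : ℂ) ^ ((j : ℤ) - (i : ℤ) - 1) * Λ i)) atTop (𝓝 (Λ j)) := by
        refine (fac (e := (j:ℤ)-(i:ℤ)-1) (d := 0) (-(q * Λ i)) (Λ j) _ (by omega) le_rfl
          ?_).congr fun t => by ring
        rw [if_neg (by omega), if_pos rfl]; ring
      have hg₁ : Tendsto (fun t : ℝ => (t : ℂ) ^ (-(0:ℤ)) *
          ((t : ℂ) ^ ((j : ℤ) - (i : ℤ)) * Λ i - Λ j)) atTop (𝓝 (-Λ j)) := by
        refine (fac (e := (j:ℤ)-(i:ℤ)) (d := 0) (Λ i) (-Λ j) _ (by omega) le_rfl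
          ?_).congr fun t => by ring
        rw [if_neg (by omega), if_pos rfl]; ring
      have hg₂ : Tendsto (fun t : ℝ => (t : ℂ) ^ (-(0:ℤ)) *
          (Λ j - q * (t : ℂ) ^ ((j : ℤ) - (i : ℤ)) * Λ i)) atTop (𝓝 (Λ j)) := by
        refine (fac (e := (j:ℤ)-(i:ℤ)) (d := 0) (-(q * Λ i)) (Λ j) _ (by omega) le_rfl
          ?_).congr fun t => by ring
        rw [if_neg (by omega), if_pos rfl]; ring
      by_cases hcase : j = i - 1
      · rw [if_pos hcase]
        have hf₁ : Tendsto (fun t : ℝ => (t : ℂ) ^ (-(0:ℤ)) *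
            ((t : ℂ) ^ ((j : ℤ) - (i : ℤ) + 1) * Λ i - Λ j)) atTop (𝓝 (Λ i - Λ j)) := by
          refine (fac (e := (j:ℤ)-(i:ℤ)+1) (d := 0) (Λ i) (-Λ j) _ (by omega) le_rfl
            ?_).congr fun t => by ring
          rw [if_pos (by omega), if_pos rfl]; ring
        have h := ratio2 (by ring) hf₁ hf₂ hg₁ hg₂ (by simp [hΛj])
        convert h using 2
        rw [← hcase]
        field_simp [hΛj]
        ring
      · rw [if_neg hcase]
        have hf₁ : Tendsto (fun t : ℝ => (t : ℂ) ^ (-(0:ℤ)) *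
            ((t : ℂ) ^ ((j : ℤ) - (i : ℤ) + 1) * Λ i - Λ j)) atTop (𝓝 (-Λ j)) := by
          refine (fac (e := (j:ℤ)-(i:ℤ)+1) (d := 0) (Λ i) (-Λ j) _ (by omega) le_rfl
            ?_).congr fun t => by ring
          rw [if_neg (by omega), if_pos rfl]; ring
        have h := ratio2 (by ring) hf₁ hf₂ hg₁ hg₂ (by simp [hΛj])
        convert h using 2
        field_simp [hΛj]
    convert key using 2
    rw [Finset.prod_ite_eq' (Finset.Ico 1 i) (i-1)
      (fun _ => 1 - Λ i / Λ (i - 1)), if_pos (Finset.mem_Ico.mpr ⟨by omega, by omega⟩)]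
  · -- Part (ii)
    intro i hi1 hiN1
    have hiN : i + 1 ≤ N := by omega
    have hΛi : Λ i ≠ 0 := hΛ i (Finset.mem_Icc.mpr ⟨hi1, by omega⟩)
    -- A * B  → 1
    have hAB : Tendsto (fun t : ℝ =>
        ((1 - (t : ℂ) ^ ((N : ℤ) - (i : ℤ)) * Λ i) /
            (1 - (t : ℂ) ^ ((N : ℤ) + 1 - (i : ℤ)) * Λ i)) *
          (((t : ℂ) ^ ((N : ℤ) + 2 - (i : ℤ)) * Λ i - q) /
            ((t : ℂ) ^ ((N : ℤ) + 1 - (i : ℤ)) * Λ i - q))) atTop (𝓝 1) := by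
      have hf₁ : Tendsto (fun t : ℝ => (t : ℂ) ^ (-((N:ℤ)-(i:ℤ))) *
          (1 - (t : ℂ) ^ ((N : ℤ) - (i : ℤ)) * Λ i)) atTop (𝓝 (-Λ i)) := by
        refine (fac (e := (N:ℤ)-(i:ℤ)) (d := (N:ℤ)-(i:ℤ)) (-Λ i) 1 _ le_rfl (by omega)
          ?_).congr fun t => by ring
        rw [if_pos rfl, if_neg (by omega)]; ring
      have hf₂ : Tendsto (fun t : ℝ => (t : ℂ) ^ (-((N:ℤ)+2-(i:ℤ))) *
          ((t : ℂ) ^ ((N : ℤ) + 2 - (i : ℤ)) * Λ i - q)) atTop (𝓝 (Λ i)) := by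
        refine (fac (e := (N:ℤ)+2-(i:ℤ)) (d := (N:ℤ)+2-(i:ℤ)) (Λ i) (-q) _ le_rfl (by omega)
          ?_).congr fun t => by ring
        rw [if_pos rfl, if_neg (by omega)]; ring
      have hg₁ : Tendsto (fun t : ℝ => (t : ℂ) ^ (-((N:ℤ)+1-(i:ℤ))) *
          (1 - (t : ℂ) ^ ((N : ℤ) + 1 - (i : ℤ)) * Λ i)) atTop (𝓝 (-Λ i)) := by
        refine (fac (e := (N:ℤ)+1-(i:ℤ)) (d := (N:ℤ)+1-(i:ℤ)) (-Λ i) 1 _ le_rfl (by omega)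
          ?_).congr fun t => by ring
        rw [if_pos rfl, if_neg (by omega)]; ring
      have hg₂ : Tendsto (fun t : ℝ => (t : ℂ) ^ (-((N:ℤ)+1-(i:ℤ))) *
          ((t : ℂ) ^ ((N : ℤ) + 1 - (i : ℤ)) * Λ i - q)) atTop (𝓝 (Λ i)) := by
        refine (fac (e := (N:ℤ)+1-(i:ℤ)) (d := (N:ℤ)+1-(i:ℤ)) (Λ i) (-q) _ le_rfl (by omega)
          ?_).congr fun t => by ring
        rw [if_pos rfl, if_neg (by omega)]; ring
      have h := ratio2 (by ring) hf₁ hf₂ hg₁ hg₂ (by simp [hΛi])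
      rwa [div_self (by simp [hΛi])] at h
    -- P1 → 1 - Λ_{i+1}/Λ_i
    have hP1 : Tendsto (fun t : ℝ =>
        ∏ j ∈ Finset.Icc (i + 1) N,
          (((t : ℂ) ^ ((j : ℤ) - (i : ℤ) + 1) * Λ i - q * Λ j) /
              ((t : ℂ) ^ ((j : ℤ) - (i : ℤ)) * Λ i - q * Λ j)) *
            ((Λ j - (t : ℂ) ^ ((j : ℤ) - (i : ℤ) - 1) * Λ i) /
              (Λ j - (t : ℂ) ^ ((j : ℤ) - (i : ℤ)) * Λ i))) atTop
        (𝓝 (1 - Λ (i + 1) / Λ i)) := by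
      have key : Tendsto (fun t : ℝ =>
          ∏ j ∈ Finset.Icc (i + 1) N,
            (((t : ℂ) ^ ((j : ℤ) - (i : ℤ) + 1) * Λ i - q * Λ j) /
                ((t : ℂ) ^ ((j : ℤ) - (i : ℤ)) * Λ i - q * Λ j)) *
              ((Λ j - (t : ℂ) ^ ((j : ℤ) - (i : ℤ) - 1) * Λ i) /
                (Λ j - (t : ℂ) ^ ((j : ℤ) - (i : ℤ)) * Λ i))) atTop
          (𝓝 (∏ j ∈ Finset.Icc (i + 1) N,
            if j = i + 1 then 1 - Λ (i + 1) / Λ i else 1)) := by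
        refine tendsto_finset_prod _ ?_
        intro j hj
        rw [Finset.mem_Icc] at hj
        obtain ⟨hj1, hj2⟩ := hj
        have hΛj : Λ j ≠ 0 := hΛ j (Finset.mem_Icc.mpr ⟨by omega, hj2⟩)
        have hf₁ : Tendsto (fun t : ℝ => (t : ℂ) ^ (-((j:ℤ)-(i:ℤ)+1)) *
            ((t : ℂ) ^ ((j : ℤ) - (i : ℤ) + 1) * Λ i - q * Λ j)) atTop (𝓝 (Λ i)) := by
          refine (fac (e := (j:ℤ)-(i:ℤ)+1) (d := (j:ℤ)-(i:ℤ)+1) (Λ i) (-(q * Λ j)) _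
            le_rfl (by omega) ?_).congr fun t => by ring
          rw [if_pos rfl, if_neg (by omega)]; ring
        have hg₁ : Tendsto (fun t : ℝ => (t : ℂ) ^ (-((j:ℤ)-(i:ℤ))) *
            ((t : ℂ) ^ ((j : ℤ) - (i : ℤ)) * Λ i - q * Λ j)) atTop (𝓝 (Λ i)) := by
          refine (fac (e := (j:ℤ)-(i:ℤ)) (d := (j:ℤ)-(i:ℤ)) (Λ i) (-(q * Λ j)) _
            le_rfl (by omega) ?_).congr fun t => by ring
          rw [if_pos rfl, if_neg (by omega)]; ring
        have hg₂ : Tendsto (fun t : ℝ => (t : ℂ) ^ (-((j:ℤ)-(i:ℤ))) *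
            (Λ j - (t : ℂ) ^ ((j : ℤ) - (i : ℤ)) * Λ i)) atTop (𝓝 (-Λ i)) := by
          refine (fac (e := (j:ℤ)-(i:ℤ)) (d := (j:ℤ)-(i:ℤ)) (-Λ i) (Λ j) _
            le_rfl (by omega) ?_).congr fun t => by ring
          rw [if_pos rfl, if_neg (by omega)]; ring
        by_cases hcase : j = i + 1
        · rw [if_pos hcase]
          have hf₂ : Tendsto (fun t : ℝ => (t : ℂ) ^ (-((j:ℤ)-(i:ℤ)-1)) *
              (Λ j - (t : ℂ) ^ ((j : ℤ) - (i : ℤ) - 1) * Λ i)) atTop (𝓝 (Λ j - Λ i)) := by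
            refine (fac (e := (j:ℤ)-(i:ℤ)-1) (d := (j:ℤ)-(i:ℤ)-1) (-Λ i) (Λ j) _
              le_rfl (by omega) ?_).congr fun t => by ring
            rw [if_pos rfl, if_pos (by omega)]; ring
          have h := ratio2 (by ring) hf₁ hf₂ hg₁ hg₂ (by simp [hΛi])
          convert h using 2
          rw [← hcase]
          field_simp [hΛi]
          ring
        · rw [if_neg hcase]
          have hf₂ : Tendsto (fun t : ℝ => (t : ℂ) ^ (-((j:ℤ)-(i:ℤ)-1)) *
              (Λ j - (t : ℂ) ^ ((j : ℤ) - (i : ℤ) - 1) * Λ i)) atTop (𝓝 (-Λ i)) := by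
            refine (fac (e := (j:ℤ)-(i:ℤ)-1) (d := (j:ℤ)-(i:ℤ)-1) (-Λ i) (Λ j) _
              le_rfl (by omega) ?_).congr fun t => by ring
            rw [if_pos rfl, if_neg (by omega)]; ring
          have h := ratio2 (by ring) hf₁ hf₂ hg₁ hg₂ (by simp [hΛi])
          convert h using 2
          field_simp [hΛi]
      convert key using 2
      rw [Finset.prod_ite_eq' (Finset.Icc (i+1) N) (i+1)
        (fun _ => 1 - Λ (i + 1) / Λ i), if_pos (Finset.mem_Icc.mpr ⟨le_rfl, hiN⟩)]
    -- P2 → 1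
    have hP2 : Tendsto (fun t : ℝ =>
        ∏ j ∈ (Finset.Icc 1 N).erase i,
          ((1 - (t : ℂ) ^ (2 * (N : ℤ) + 1 - (i : ℤ) - (j : ℤ)) * Λ i * Λ j) /
              (1 - (t : ℂ) ^ (2 * (N : ℤ) + 2 - (i : ℤ) - (j : ℤ)) * Λ i * Λ j)) *
            (((t : ℂ) ^ (2 * (N : ℤ) + 3 - (i : ℤ) - (j : ℤ)) * Λ i * Λ j - q) /
              ((t : ℂ) ^ (2 * (N : ℤ) + 2 - (i : ℤ) - (j : ℤ)) * Λ i * Λ j - q)))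
        atTop (𝓝 1) := by
      have key : Tendsto (fun t : ℝ =>
          ∏ j ∈ (Finset.Icc 1 N).erase i,
            ((1 - (t : ℂ) ^ (2 * (N : ℤ) + 1 - (i : ℤ) - (j : ℤ)) * Λ i * Λ j) /
                (1 - (t : ℂ) ^ (2 * (N : ℤ) + 2 - (i : ℤ) - (j : ℤ)) * Λ i * Λ j)) *
              (((t : ℂ) ^ (2 * (N : ℤ) + 3 - (i : ℤ) - (j : ℤ)) * Λ i * Λ j - q) /
                ((t : ℂ) ^ (2 * (N : ℤ) + 2 - (i : ℤ) - (j : ℤ)) * Λ i * Λ j - q)))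
          atTop (𝓝 (∏ _j ∈ (Finset.Icc 1 N).erase i, (1:ℂ))) := by
        refine tendsto_finset_prod _ ?_
        intro j hj
        rw [Finset.mem_erase, Finset.mem_Icc] at hj
        obtain ⟨hjne, hj1, hj2⟩ := hj
        have hΛj : Λ j ≠ 0 := hΛ j (Finset.mem_Icc.mpr ⟨hj1, hj2⟩)
        have hf₁ : Tendsto (fun t : ℝ => (t : ℂ) ^ (-(2*(N:ℤ)+1-(i:ℤ)-(j:ℤ))) *
            (1 - (t : ℂ) ^ (2 * (N : ℤ) + 1 - (i : ℤ) - (j : ℤ)) * Λ i * Λ j)) atTop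
            (𝓝 (-(Λ i * Λ j))) := by
          refine (fac (e := 2*(N:ℤ)+1-(i:ℤ)-(j:ℤ)) (d := 2*(N:ℤ)+1-(i:ℤ)-(j:ℤ))
            (-(Λ i * Λ j)) 1 _ le_rfl (by omega) ?_).congr fun t => by ring
          rw [if_pos rfl, if_neg (by omega)]; ring
        have hf₂ : Tendsto (fun t : ℝ => (t : ℂ) ^ (-(2*(N:ℤ)+3-(i:ℤ)-(j:ℤ))) *
            ((t : ℂ) ^ (2 * (N : ℤ) + 3 - (i : ℤ) - (j : ℤ)) * Λ i * Λ j - q)) atTop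
            (𝓝 (Λ i * Λ j)) := by
          refine (fac (e := 2*(N:ℤ)+3-(i:ℤ)-(j:ℤ)) (d := 2*(N:ℤ)+3-(i:ℤ)-(j:ℤ))
            (Λ i * Λ j) (-q) _ le_rfl (by omega) ?_).congr fun t => by ring
          rw [if_pos rfl, if_neg (by omega)]; ring
        have hg₁ : Tendsto (fun t : ℝ => (t : ℂ) ^ (-(2*(N:ℤ)+2-(i:ℤ)-(j:ℤ))) *
            (1 - (t : ℂ) ^ (2 * (N : ℤ) + 2 - (i : ℤ) - (j : ℤ)) * Λ i * Λ j)) atTop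
            (𝓝 (-(Λ i * Λ j))) := by
          refine (fac (e := 2*(N:ℤ)+2-(i:ℤ)-(j:ℤ)) (d := 2*(N:ℤ)+2-(i:ℤ)-(j:ℤ))
            (-(Λ i * Λ j)) 1 _ le_rfl (by omega) ?_).congr fun t => by ring
          rw [if_pos rfl, if_neg (by omega)]; ring
        have hg₂ : Tendsto (fun t : ℝ => (t : ℂ) ^ (-(2*(N:ℤ)+2-(i:ℤ)-(j:ℤ))) *
            ((t : ℂ) ^ (2 * (N : ℤ) + 2 - (i : ℤ) - (j : ℤ)) * Λ i * Λ j - q)) atTop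
            (𝓝 (Λ i * Λ j)) := by
          refine (fac (e := 2*(N:ℤ)+2-(i:ℤ)-(j:ℤ)) (d := 2*(N:ℤ)+2-(i:ℤ)-(j:ℤ))
            (Λ i * Λ j) (-q) _ le_rfl (by omega) ?_).congr fun t => by ring
          rw [if_pos rfl, if_neg (by omega)]; ring
        have h := ratio2 (by ring) hf₁ hf₂ hg₁ hg₂ (by simp [hΛi, hΛj])
        rwa [div_self (by simp [hΛi, hΛj])] at h
      simpa using key
    have h := (hAB.mul hP1).mul hP2
    simpa using h
  · -- Part (iii)
    have hΛN : Λ N ≠ 0 := hΛ N (Finset.mem_Icc.mpr ⟨hN, le_rfl⟩)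
    have hAB : Tendsto (fun t : ℝ =>
        ((1 - Λ N) / (1 - (t : ℂ) * Λ N)) *
          (((t : ℂ) ^ 2 * Λ N - q) / ((t : ℂ) * Λ N - q))) atTop
        (𝓝 (1 - 1 / Λ N)) := by
      have hf₁ : Tendsto (fun t : ℝ => (t : ℂ) ^ (-(0:ℤ)) * (1 - Λ N)) atTop
          (𝓝 (1 - Λ N)) := by
        simp only [neg_zero, zpow_zero, one_mul]
        exact tendsto_const_nhds
      have hf₂ : Tendsto (fun t : ℝ => (t : ℂ) ^ (-(2:ℤ)) *
          ((t : ℂ) ^ 2 * Λ N - q)) atTop (𝓝 (Λ N)) := by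
        refine (fac (e := (2:ℤ)) (d := (2:ℤ)) (Λ N) (-q) _ le_rfl (by omega)
          ?_).congr fun t => by rw [zpow_ofNat]; ring
        rw [if_pos rfl, if_neg (by omega)]; ring
      have hg₁ : Tendsto (fun t : ℝ => (t : ℂ) ^ (-(1:ℤ)) *
          (1 - (t : ℂ) * Λ N)) atTop (𝓝 (-Λ N)) := by
        refine (fac (e := (1:ℤ)) (d := (1:ℤ)) (-Λ N) 1 _ le_rfl (by omega)
          ?_).congr fun t => by rw [zpow_one]; ring
        rw [if_pos rfl, if_neg (by omega)]; ring
      have hg₂ : Tendsto (fun t : ℝ => (t : ℂ) ^ (-(1:ℤ)) *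
          ((t : ℂ) * Λ N - q)) atTop (𝓝 (Λ N)) := by
        refine (fac (e := (1:ℤ)) (d := (1:ℤ)) (Λ N) (-q) _ le_rfl (by omega)
          ?_).congr fun t => by rw [zpow_one]; ring
        rw [if_pos rfl, if_neg (by omega)]; ring
      have h := ratio2 (by ring) hf₁ hf₂ hg₁ hg₂ (by simp [hΛN])
      convert h using 2
      field_simp [hΛN]
      ring
    have hP : Tendsto (fun t : ℝ =>
        ∏ j ∈ (Finset.Icc 1 N).erase N,
          ((1 - (t : ℂ) ^ ((N : ℤ) + 1 - (j : ℤ)) * Λ N * Λ j) /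
              (1 - (t : ℂ) ^ ((N : ℤ) + 2 - (j : ℤ)) * Λ N * Λ j)) *
            (((t : ℂ) ^ ((N : ℤ) + 3 - (j : ℤ)) * Λ N * Λ j - q) /
              ((t : ℂ) ^ ((N : ℤ) + 2 - (j : ℤ)) * Λ N * Λ j - q))) atTop (𝓝 1) := by
      have key : Tendsto (fun t : ℝ =>
          ∏ j ∈ (Finset.Icc 1 N).erase N,
            ((1 - (t : ℂ) ^ ((N : ℤ) + 1 - (j : ℤ)) * Λ N * Λ j) /
                (1 - (t : ℂ) ^ ((N : ℤ) + 2 - (j : ℤ)) * Λ N * Λ j)) *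
              (((t : ℂ) ^ ((N : ℤ) + 3 - (j : ℤ)) * Λ N * Λ j - q) /
                ((t : ℂ) ^ ((N : ℤ) + 2 - (j : ℤ)) * Λ N * Λ j - q)))
          atTop (𝓝 (∏ _j ∈ (Finset.Icc 1 N).erase N, (1:ℂ))) := by
        refine tendsto_finset_prod _ ?_
        intro j hj
        rw [Finset.mem_erase, Finset.mem_Icc] at hj
        obtain ⟨hjne, hj1, hj2⟩ := hj
        have hΛj : Λ j ≠ 0 := hΛ j (Finset.mem_Icc.mpr ⟨hj1, hj2⟩)
        have hjN : j < N := by omega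
        have hf₁ : Tendsto (fun t : ℝ => (t : ℂ) ^ (-((N:ℤ)+1-(j:ℤ))) *
            (1 - (t : ℂ) ^ ((N : ℤ) + 1 - (j : ℤ)) * Λ N * Λ j)) atTop
            (𝓝 (-(Λ N * Λ j))) := by
          refine (fac (e := (N:ℤ)+1-(j:ℤ)) (d := (N:ℤ)+1-(j:ℤ))
            (-(Λ N * Λ j)) 1 _ le_rfl (by omega) ?_).congr fun t => by ring
          rw [if_pos rfl, if_neg (by omega)]; ring
        have hf₂ : Tendsto (fun t : ℝ => (t : ℂ) ^ (-((N:ℤ)+3-(j:ℤ))) *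
            ((t : ℂ) ^ ((N : ℤ) + 3 - (j : ℤ)) * Λ N * Λ j - q)) atTop
            (𝓝 (Λ N * Λ j)) := by
          refine (fac (e := (N:ℤ)+3-(j:ℤ)) (d := (N:ℤ)+3-(j:ℤ))
            (Λ N * Λ j) (-q) _ le_rfl (by omega) ?_).congr fun t => by ring
          rw [if_pos rfl, if_neg (by omega)]; ring
        have hg₁ : Tendsto (fun t : ℝ => (t : ℂ) ^ (-((N:ℤ)+2-(j:ℤ))) *
            (1 - (t : ℂ) ^ ((N : ℤ) + 2 - (j : ℤ)) * Λ N * Λ j)) atTop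
            (𝓝 (-(Λ N * Λ j))) := by
          refine (fac (e := (N:ℤ)+2-(j:ℤ)) (d := (N:ℤ)+2-(j:ℤ))
            (-(Λ N * Λ j)) 1 _ le_rfl (by omega) ?_).congr fun t => by ring
          rw [if_pos rfl, if_neg (by omega)]; ring
        have hg₂ : Tendsto (fun t : ℝ => (t : ℂ) ^ (-((N:ℤ)+2-(j:ℤ))) *
            ((t : ℂ) ^ ((N : ℤ) + 2 - (j : ℤ)) * Λ N * Λ j - q)) atTop
            (𝓝 (Λ N * Λ j)) := by
          refine (fac (e := (N:ℤ)+2-(j:ℤ)) (d := (N:ℤ)+2-(j:ℤ))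
            (Λ N * Λ j) (-q) _ le_rfl (by omega) ?_).congr fun t => by ring
          rw [if_pos rfl, if_neg (by omega)]; ring
        have h := ratio2 (by ring) hf₁ hf₂ hg₁ hg₂ (by simp [hΛN, hΛj])
        rwa [div_self (by simp [hΛN, hΛj])] at h
      simpa using key
    have h := hAB.mul hP
    simpa using h
end
end

section
/- Let N ≥ 2, q ∈ ℂ∖{0} and Λ_1,…,Λ_N ∈ ℂ∖{0}. As the real parameter t → +∞: (i) for each 2 ≤ i ≤ N the coefficient ∏_{j<i} [ (t^{i−j−1} Λ_j − Λ_i)/(t^{i−j} Λ_j − Λ_i) ] · [ (t^{i−j+1} Λ_j − q Λ_i)/(t^{i−j} Λ_j − q Λ_i) ] tends to 1 − Λ_i/Λ_{i−1}; (ii) for each i define Q_i(t) := ∏_{j>i} [ (t^{j−i+1} Λ_i − q Λ_j)/(t^{j−i} Λ_i − q Λ_j) ] · [ (t^{j−i−1} Λ_i − Λ_j)/(t^{j−i} Λ_i − Λ_j) ] · ∏_{j≠i} [ (1 − t^{2N−i−j−1} Λ_i Λ_j)/(1 − t^{2N−i−j} Λ_i Λ_j) ] · [ (t^{2N−i−j+1}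 Λ_i Λ_j − q)/(t^{2N−i−j} Λ_i Λ_j − q) ]; then Q_i(t) tends to 1 − Λ_{i+1}/Λ_i for 1 ≤ i ≤ N−2, Q_{N−1}(t) tends to (1 − Λ_N/Λ_{N−1})(1 − 1/(Λ_{N−1} Λ_N)), and Q_N(t) tends to 1 − 1/(Λ_{N−1} Λ_N). Consequently the first Pieri operator 𝓗_1^{(D_N^{(1)})}(Λ; q, t) converges coefficientwise as t → ∞ to the relativistic q-difference Toda Hamiltonian H_1^{(D_N^{(1)})}(Λ) = T_1 + Σ_{i=2}^N (1 − Λ_i/Λ_{i−1}) T_i + Σ_{i=1}^{N−2} (1 − Λ_{i+1}/Λ_i) T_i^{−1} + (1 − Λ_N/Λ_{N−1})(1 − 1/(Λ_{N−1}Λ_N)) T_{N−1}^{−1} + (1 − 1/(Λ_{N−1}Λ_N)) T_N^{−1}. -/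
open scoped BigOperators Topology
open Filter

noncomputable section

/-- The coefficient `Q_i(t)` of `T_i⁻¹` in the first Pieri operator
`𝓗_1^{(D_N^{(1)})}(Λ; q, t)` for `D_N^{(1)}`-Macdonald polynomials. -/
noncomputable def Qcoef (N : ℕ) (q : ℂ) (Λ : ℕ → ℂ) (i : ℕ) (t : ℝ) : ℂ :=
  (∏ j ∈ Finset.Icc (i + 1) N,
      (((t : ℂ) ^ ((j : ℤ) - (i : ℤ) + 1) * Λ i - q * Λ j) /
          ((t : ℂ) ^ ((j : ℤ) - (i : ℤ)) * Λ i - q * Λ j)) *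
        (((t : ℂ) ^ ((j : ℤ) - (i : ℤ) - 1) * Λ i - Λ j) /
          ((t : ℂ) ^ ((j : ℤ) - (i : ℤ)) * Λ i - Λ j))) *
    ∏ j ∈ (Finset.Icc 1 N).erase i,
      ((1 - (t : ℂ) ^ (2 * (N : ℤ) - (i : ℤ) - (j : ℤ) - 1) * Λ i * Λ j) /
          (1 - (t : ℂ) ^ (2 * (N : ℤ) - (i : ℤ) - (j : ℤ)) * Λ i * Λ j)) *
        (((t : ℂ) ^ (2 * (N : ℤ) - (i : ℤ) - (j : ℤ) + 1) * Λ i * Λ j - q) /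
          ((t : ℂ) ^ (2 * (N : ℤ) - (i : ℤ) - (j : ℤ)) * Λ i * Λ j - q))


private lemma zpow_tendsto_zero {m : ℤ} (hm : m < 0) :
    Tendsto (fun t : ℝ => (t : ℂ) ^ m) atTop (𝓝 0) := by
  have h2 : Tendsto (fun x : ℝ => x ^ m) atTop (𝓝 0) := tendsto_zpow_atTop_zero hm
  simpa [Function.comp_def, Complex.ofReal_zpow] using (Complex.continuous_ofReal.tendsto 0).comp h2

private lemma pair_tendsto (a b c : ℂ) (ha : a ≠ 0) (e : ℤ) (he : 1 ≤ e) :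
    Tendsto (fun t : ℝ =>
        (((t:ℂ) ^ (e - 1) * a - b) / ((t:ℂ) ^ e * a - b)) *
          (((t:ℂ) ^ (e + 1) * a - c) / ((t:ℂ) ^ e * a - c)))
      atTop (𝓝 (if e = 1 then 1 - b / a else 1)) := by
  set δ : ℂ := if e = 1 then 1 else 0 with hδ
  have hδlim : Tendsto (fun t : ℝ => (t:ℂ) ^ (1 - e)) atTop (𝓝 δ) := by
    rcases eq_or_lt_of_le he with h1 | h1
    · simp [hδ, ← h1]
    · have hlt : (1 : ℤ) - e < 0 := by omega
      have hne : e ≠ 1 := by omega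
      simpa [hδ, hne] using zpow_tendsto_zero hlt
  have hne : Tendsto (fun t : ℝ => (t:ℂ) ^ (-e)) atTop (𝓝 0) := zpow_tendsto_zero (by omega)
  have hne1 : Tendsto (fun t : ℝ => (t:ℂ) ^ (-e - 1)) atTop (𝓝 0) := zpow_tendsto_zero (by omega)
  have hg : Tendsto (fun t : ℝ =>
      ((a - b * (t:ℂ) ^ (1 - e)) * (a - c * (t:ℂ) ^ (-e - 1))) /
        ((a - b * (t:ℂ) ^ (-e)) * (a - c * (t:ℂ) ^ (-e))))
      atTop (𝓝 (((a - b * δ) * (a - c * 0)) / ((a - b * 0) * (a - c * 0)))) := by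
    apply Tendsto.div
    · exact (tendsto_const_nhds.sub (tendsto_const_nhds.mul hδlim)).mul
        (tendsto_const_nhds.sub (tendsto_const_nhds.mul hne1))
    · exact (tendsto_const_nhds.sub (tendsto_const_nhds.mul hne)).mul
        (tendsto_const_nhds.sub (tendsto_const_nhds.mul hne))
    · simpa using mul_ne_zero ha ha
  have hval : ((a - b * δ) * (a - c * 0)) / ((a - b * 0) * (a - c * 0))
      = (if e = 1 then 1 - b / a else 1) := by
    by_cases h1 : e = 1
    · simp only [hδ, if_pos h1, mul_one, mul_zero, sub_zero]
      field_simp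
    · simp only [hδ, if_neg h1, mul_zero, sub_zero]
      exact div_self (mul_ne_zero ha ha)
  rw [← hval]
  refine Tendsto.congr' ?_ hg
  filter_upwards [eventually_ge_atTop (1:ℝ)] with t ht
  have hu : (t : ℂ) ≠ 0 := by
    simp only [ne_eq, Complex.ofReal_eq_zero]; linarith
  set u : ℂ := (t : ℂ) with hu'
  have hz : ∀ (p r : ℤ) (x : ℂ), p + r = 0 → u ^ p * (x * u ^ r) = x := by
    intro p r x h
    rw [mul_comm x, ← mul_assoc, ← zpow_add₀ hu, h, zpow_zero, one_mul]
  have h1 : u ^ (e-1) * a - b = u ^ (e-1) * (a - b * u ^ (1-e)) := by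
    rw [mul_sub, hz _ _ _ (by ring)]
  have h2 : u ^ e * a - b = u ^ (e-1) * (u * (a - b * u ^ (-e))) := by
    have hu1 : u ^ (e-1) * u = u ^ e := by
      rw [← zpow_add_one₀ hu]; congr 1; ring
    rw [show u ^ (e-1) * (u * (a - b * u ^ (-e))) = (u ^ (e-1) * u) * (a - b * u ^ (-e)) by ring,
      hu1, mul_sub, hz _ _ _ (by ring)]
  have h3 : u ^ (e+1) * a - c = u ^ e * (u * (a - c * u ^ (-e-1))) := by
    have hu2 : u ^ e * u = u ^ (e+1) := by
      rw [← zpow_add_one₀ hu]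
    rw [show u ^ e * (u * (a - c * u ^ (-e-1))) = (u ^ e * u) * (a - c * u ^ (-e-1)) by ring,
      hu2, mul_sub, hz _ _ _ (by ring)]
  have h4 : u ^ e * a - c = u ^ e * (a - c * u ^ (-e)) := by
    rw [mul_sub, hz _ _ _ (by ring)]
  symm
  rw [h1, h2, h3, h4, mul_div_mul_left _ _ (zpow_ne_zero (e-1) hu),
    mul_div_mul_left _ _ (zpow_ne_zero e hu), div_mul_div_comm,
    show (a - b*u^(1-e)) * (u * (a - c*u^(-e-1))) = u * ((a - b*u^(1-e)) * (a - c*u^(-e-1))) by ring,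
    show (u * (a - b*u^(-e))) * (a - c*u^(-e)) = u * ((a - b*u^(-e)) * (a - c*u^(-e))) by ring,
    mul_div_mul_left _ _ hu]

private lemma pair2_tendsto (a c : ℂ) (ha : a ≠ 0) (m : ℤ) (hm : 1 ≤ m) :
    Tendsto (fun t : ℝ =>
        ((1 - (t:ℂ) ^ (m - 1) * a) / (1 - (t:ℂ) ^ m * a)) *
          (((t:ℂ) ^ (m + 1) * a - c) / ((t:ℂ) ^ m * a - c)))
      atTop (𝓝 (if m = 1 then 1 - 1 / a else 1)) := by
  have h := pair_tendsto a 1 c ha m hm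
  refine h.congr fun t => ?_
  rw [show (1 : ℂ) - (t:ℂ)^(m-1)*a = -((t:ℂ)^(m-1)*a - 1) by ring,
    show (1 : ℂ) - (t:ℂ)^m*a = -((t:ℂ)^m*a - 1) by ring, neg_div_neg_eq]

private lemma Qcoef_tendsto (N : ℕ) (q : ℂ) (Λ : ℕ → ℂ) (i : ℕ)
    (hi1 : 1 ≤ i) (hiN : i ≤ N) (hΛ : ∀ k ∈ Finset.Icc 1 N, Λ k ≠ 0) :
    Tendsto (Qcoef N q Λ i) atTop
      (𝓝 ((∏ j ∈ Finset.Icc (i+1) N, if (j:ℤ) - (i:ℤ) = 1 then 1 - Λ j / Λ i else 1) *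
          ∏ j ∈ (Finset.Icc 1 N).erase i,
            if 2*(N:ℤ) - (i:ℤ) - (j:ℤ) = 1 then 1 - 1/(Λ i * Λ j) else 1)) := by
  have hΛi : Λ i ≠ 0 := hΛ i (Finset.mem_Icc.mpr ⟨hi1, hiN⟩)
  unfold Qcoef
  apply Tendsto.mul
  · apply tendsto_finset_prod
    intro j hj
    rw [Finset.mem_Icc] at hj
    have hΛj : Λ j ≠ 0 := hΛ j (Finset.mem_Icc.mpr ⟨by omega, hj.2⟩)
    have h := pair_tendsto (Λ i) (Λ j) (q * Λ j) hΛi ((j:ℤ) - (i:ℤ)) (by omega)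
    exact h.congr fun t => by ring
  · apply tendsto_finset_prod
    intro j hj
    rw [Finset.mem_erase, Finset.mem_Icc] at hj
    have hΛj : Λ j ≠ 0 := hΛ j (Finset.mem_Icc.mpr hj.2)
    have h := pair2_tendsto (Λ i * Λ j) q (mul_ne_zero hΛi hΛj)
      (2*(N:ℤ) - (i:ℤ) - (j:ℤ)) (by omega)
    exact h.congr fun t => by ring

/-- The q-Whittaker limit `t → ∞` of the coefficients of the first Pieri operator
`𝓗_1^{(D_N^{(1)})}(Λ; q, t)`:
(i) the coefficient of `T_i` (`2 ≤ i ≤ N`) tends to `1 - Λ_i/Λ_{i-1}`;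
(ii) `Q_i(t) → 1 - Λ_{i+1}/Λ_i` for `1 ≤ i ≤ N-2`,
`Q_{N-1}(t) → (1 - Λ_N/Λ_{N-1})(1 - 1/(Λ_{N-1}Λ_N))`, and
`Q_N(t) → 1 - 1/(Λ_{N-1}Λ_N)`.
Consequently `𝓗_1^{(D_N^{(1)})}` converges coefficientwise to the relativistic
q-difference Toda Hamiltonian `H_1^{(D_N^{(1)})}`. -/
theorem pieri_whittaker_limit_D (N : ℕ) (hN : 2 ≤ N) (q : ℂ) (hq : q ≠ 0)
    (Λ : ℕ → ℂ) (hΛ : ∀ i ∈ Finset.Icc 1 N, Λ i ≠ 0) :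
    (∀ i : ℕ, 2 ≤ i → i ≤ N →
      Tendsto (fun t : ℝ =>
          ∏ j ∈ Finset.Ico 1 i,
            (((t : ℂ) ^ ((i : ℤ) - (j : ℤ) - 1) * Λ j - Λ i) /
                ((t : ℂ) ^ ((i : ℤ) - (j : ℤ)) * Λ j - Λ i)) *
              (((t : ℂ) ^ ((i : ℤ) - (j : ℤ) + 1) * Λ j - q * Λ i) /
                ((t : ℂ) ^ ((i : ℤ) - (j : ℤ)) * Λ j - q * Λ i)))
        atTop (𝓝 (1 - Λ i / Λ (i - 1)))) ∧
    (∀ i : ℕ, 1 ≤ i → i ≤ N - 2 →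
      Tendsto (Qcoef N q Λ i) atTop (𝓝 (1 - Λ (i + 1) / Λ i))) ∧
    Tendsto (Qcoef N q Λ (N - 1)) atTop
      (𝓝 ((1 - Λ N / Λ (N - 1)) * (1 - 1 / (Λ (N - 1) * Λ N)))) ∧
    Tendsto (Qcoef N q Λ N) atTop (𝓝 (1 - 1 / (Λ (N - 1) * Λ N))) := by
  refine ⟨?_, ?_, ?_, ?_⟩
  · intro i hi2 hiN
    have hmain := tendsto_finset_prod
      (f := fun (j : ℕ) (t : ℝ) =>
        (((t : ℂ) ^ ((i : ℤ) - (j : ℤ) - 1) * Λ j - Λ i) /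
            ((t : ℂ) ^ ((i : ℤ) - (j : ℤ)) * Λ j - Λ i)) *
          (((t : ℂ) ^ ((i : ℤ) - (j : ℤ) + 1) * Λ j - q * Λ i) /
            ((t : ℂ) ^ ((i : ℤ) - (j : ℤ)) * Λ j - q * Λ i)))
      (a := fun j : ℕ => if (i:ℤ) - (j:ℤ) = 1 then 1 - Λ i / Λ j else 1)
      (Finset.Ico 1 i)
      (fun j hj => by
        rw [Finset.mem_Ico] at hj
        exact pair_tendsto (Λ j) (Λ i) (q * Λ i)
          (hΛ j (Finset.mem_Icc.mpr ⟨hj.1, by omega⟩)) ((i:ℤ) - (j:ℤ)) (by omega))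
    have hval : (∏ j ∈ Finset.Ico 1 i, if (i:ℤ) - (j:ℤ) = 1 then 1 - Λ i / Λ j else 1)
        = 1 - Λ i / Λ (i-1) := by
      rw [Finset.prod_eq_single_of_mem (i-1) (Finset.mem_Ico.mpr ⟨by omega, by omega⟩)
        (fun j hj hne => by rw [Finset.mem_Ico] at hj; exact if_neg (by omega)),
        if_pos (by omega)]
    rwa [hval] at hmain
  · intro i hi1 hi2
    have h := Qcoef_tendsto N q Λ i hi1 (by omega) hΛ
    have h1 : (∏ j ∈ Finset.Icc (i+1) N, if (j:ℤ) - (i:ℤ) = 1 then 1 - Λ j / Λ i else 1)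
        = 1 - Λ (i+1) / Λ i := by
      rw [Finset.prod_eq_single_of_mem (i+1) (Finset.mem_Icc.mpr ⟨le_refl _, by omega⟩)
        (fun j hj hne => by rw [Finset.mem_Icc] at hj; exact if_neg (by omega)),
        if_pos (by omega)]
    have h2 : (∏ j ∈ (Finset.Icc 1 N).erase i,
        if 2*(N:ℤ) - (i:ℤ) - (j:ℤ) = 1 then 1 - 1/(Λ i * Λ j) else 1) = 1 :=
      Finset.prod_eq_one (fun j hj => by
        rw [Finset.mem_erase, Finset.mem_Icc] at hj; exact if_neg (by omega))
    rwa [h1, h2, mul_one] at h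
  · have h := Qcoef_tendsto N q Λ (N-1) (by omega) (by omega) hΛ
    have h1 : (∏ j ∈ Finset.Icc (N-1+1) N, if (j:ℤ) - ((N-1 : ℕ):ℤ) = 1
        then 1 - Λ j / Λ (N-1) else 1) = 1 - Λ N / Λ (N-1) := by
      rw [Finset.prod_eq_single_of_mem N (Finset.mem_Icc.mpr ⟨by omega, le_refl _⟩)
        (fun j hj hne => by rw [Finset.mem_Icc] at hj; exact if_neg (by omega)),
        if_pos (by omega)]
    have h2 : (∏ j ∈ (Finset.Icc 1 N).erase (N-1),
        if 2*(N:ℤ) - ((N-1 : ℕ):ℤ) - (j:ℤ) = 1 then 1 - 1/(Λ (N-1) * Λ j) else 1)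
        = 1 - 1/(Λ (N-1) * Λ N) := by
      rw [Finset.prod_eq_single_of_mem N
        (by rw [Finset.mem_erase, Finset.mem_Icc]; omega)
        (fun j hj hne => by rw [Finset.mem_erase, Finset.mem_Icc] at hj; exact if_neg (by omega)),
        if_pos (by omega)]
    rwa [h1, h2] at h
  · have h := Qcoef_tendsto N q Λ N (by omega) le_rfl hΛ
    have h1 : Finset.Icc (N+1) N = ∅ := Finset.Icc_eq_empty (by omega)
    have h2 : (∏ j ∈ (Finset.Icc 1 N).erase N,
        if 2*(N:ℤ) - (N:ℤ) - (j:ℤ) = 1 then 1 - 1/(Λ N * Λ j) else 1)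
        = 1 - 1/(Λ N * Λ (N-1)) := by
      rw [Finset.prod_eq_single_of_mem (N-1)
        (by rw [Finset.mem_erase, Finset.mem_Icc]; omega)
        (fun j hj hne => by rw [Finset.mem_erase, Finset.mem_Icc] at hj; exact if_neg (by omega)),
        if_pos (by omega)]
    rwa [h1, Finset.prod_empty, h2, one_mul, mul_comm (Λ N) (Λ (N-1))] at h
end
end

section
/- Let N ≥ 2, let w ∈ ℂ∖{0} and set q := w², and let Λ_1,…,Λ_N ∈ ℂ∖{0}. For real t > 0 define G(t) := −1 + (1/2) Σ_{ε=±1} ∏_{i=1}^N [ (t^{N+3/2−i} Λ_i − ε w)/(t^{N+1/2−i} Λ_i − ε w) ] · [ (t^{N−1/2−i} Λ_i − ε w^{−1})/(t^{N+1/2−i} Λ_i − ε w^{−1}) ], where t^{s} denotes the real power of t > 0. Then as t → +∞, G(t) tends to q^{−1}/(Λ_{N−1} Λ_N) − (1 + q^{−1})/Λ_N². (This computes the t → ∞ limit of the constant term G^{(B_N^{(1)})}(Λ) of the first Pieri operator of type B_N^{(1)}, which contributes the extra constant term q^{−1}/(Λ_{N−1}Λ_N) − (1+q^{−1})/Λ_N²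 to the q-difference Toda Hamiltonian H_1^{(B_N^{(1)})}.) -/
/-!
Substitute `s = t^{-1/2}`, so that `t^{m/2} = s^{-m}`, and write `(c, d) = ε (w, w⁻¹)`.
Clearing the powers of `s`, the `i`-th factor of the product becomes a rational function of `s`
that is `1 + O(s²)` for `i ≤ N - 2` and `1 - d s / Λ_{N-1} + O(s²)` for `i = N - 1`, while the
`N`-th factor has a simple pole at `s = 0`. Hence the `ε`-summand is `Q_ε(s) / s` with `Q_ε`
regular at `0`, `Q_ε(0) = -ε w⁻¹ / Λ_N` and `Q_ε'(0)` independent of `ε`. The poles cancel in the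
`ε`-sum, which therefore tends to `Q_1'(0) + Q_{-1}'(0) = 2 Q_1'(0)`.
-/

open scoped BigOperators Topology
open Filter

namespace PieriConstantTerm

section Rescaling

variable {K : Type*} [Field K]

/-- The `i`-th factor for `i = N - 1 - k`, rescaled by `s = t^{-1/2}`. -/
def innerFactor (c d Λ : K) (k : ℕ) (z : K) : K :=
  (Λ - c * z ^ (2 * k + 5)) * (Λ - d * z ^ (2 * k + 1)) /
    ((Λ - c * z ^ (2 * k + 3)) * (Λ - d * z ^ (2 * k + 3)))

/-- `z` times the `N`-th factor, rescaled by `s = t^{-1/2}`. -/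
def topFactor (c d Λ : K) (z : K) : K :=
  (Λ - c * z ^ 3) * (z * Λ - d) / ((Λ - c * z) * (Λ - d * z))

def rescaledProduct (c d : K) (Λ : ℕ → K) (M : ℕ) (z : K) : K :=
  (∏ i ∈ Finset.Icc 1 (M + 1), innerFactor c d (Λ i) (M + 1 - i) z) *
    topFactor c d (Λ (M + 2)) z

lemma inv_mul_sub_eq {x : K} (hx : x ≠ 0) (Λ c : K) : x⁻¹ * Λ - c = x⁻¹ * (Λ - c * x) := by
  rw [mul_sub, mul_comm c x, inv_mul_cancel_left₀ hx]

lemma mul_div_mul_mul_div_mul_of_balanced {x y z r : K} (A B C D : K) (h : x * z = r * (y * y))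
    (hy : y ≠ 0) : x * A / (y * C) * (z * B / (y * D)) = r * (A * B / (C * D)) := by
  rw [div_mul_div_comm, mul_mul_mul_comm, mul_mul_mul_comm y, h, mul_assoc, mul_div_assoc,
    mul_div_mul_left _ _ (mul_ne_zero hy hy)]

lemma innerFactor_eq {s : K} (hs : s ≠ 0) (c d Λ : K) (k : ℕ) :
    ((s ^ (2 * k + 5))⁻¹ * Λ - c) / ((s ^ (2 * k + 3))⁻¹ * Λ - c) *
      (((s ^ (2 * k + 1))⁻¹ * Λ - d) / ((s ^ (2 * k + 3))⁻¹ * Λ - d)) =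
      innerFactor c d Λ k s := by
  simp only [inv_mul_sub_eq (pow_ne_zero _ hs)]
  rw [mul_div_mul_mul_div_mul_of_balanced _ _ _ _ ?_ (inv_ne_zero (pow_ne_zero _ hs)), one_mul,
    innerFactor]
  ring

lemma topFactor_eq {s : K} (hs : s ≠ 0) (c d Λ : K) :
    ((s ^ 3)⁻¹ * Λ - c) / ((s ^ 1)⁻¹ * Λ - c) * ((s * Λ - d) / ((s ^ 1)⁻¹ * Λ - d)) =
      topFactor c d Λ s / s := by
  simp only [inv_mul_sub_eq (pow_ne_zero _ hs)]
  rw [← one_mul (s * Λ - d), mul_div_mul_mul_div_mul_of_balanced (r := s⁻¹) _ _ _ _ ?_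
    (inv_ne_zero (pow_ne_zero _ hs)), topFactor] <;> ring

end Rescaling

section Derivative

variable {𝕜 : Type*} [NontriviallyNormedField 𝕜]

lemma hasDerivAt_sub_mul_pow_zero (Λ c : 𝕜) {n : ℕ} (hn : 2 ≤ n) :
    HasDerivAt (fun z : 𝕜 => Λ - c * z ^ n) 0 0 := by
  simpa [zero_pow (by omega : n - 1 ≠ 0)] using
    ((hasDerivAt_pow n (0 : 𝕜)).const_mul c).const_sub Λ

lemma hasDerivAt_mul_div_mul {f₁ f₂ g₁ g₂ : 𝕜 → 𝕜} {a₁ a₂ b₁ b₂ x c : 𝕜}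
    (hf₁ : HasDerivAt f₁ a₁ x) (hf₂ : HasDerivAt f₂ a₂ x) (hg₁ : HasDerivAt g₁ b₁ x)
    (hg₂ : HasDerivAt g₂ b₂ x) (h₁ : f₁ x = c) (h₂ : f₂ x = c) (h₃ : g₁ x = c) (h₄ : g₂ x = c)
    (hc : c ≠ 0) :
    HasDerivAt (fun z => f₁ z * f₂ z / (g₁ z * g₂ z)) ((a₁ + a₂ - b₁ - b₂) / c) x := by
  refine ((hf₁.fun_mul hf₂).fun_div (hg₁.fun_mul hg₂) (by simp [h₃, h₄, hc])).congr_deriv ?_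
  rw [h₁, h₂, h₃, h₄]
  field_simp
  ring

section Factors

variable {c d Λ : 𝕜}

lemma innerFactor_apply_zero (hΛ : Λ ≠ 0) (k : ℕ) : innerFactor c d Λ k 0 = 1 := by
  simp [innerFactor, hΛ]

lemma hasDerivAt_innerFactor_zero (hΛ : Λ ≠ 0) : HasDerivAt (innerFactor c d Λ 0) (-d / Λ) 0 := by
  have hlin : HasDerivAt (fun z : 𝕜 => Λ - d * z ^ (2 * 0 + 1)) (-d) 0 := by
    simpa using ((hasDerivAt_id (0 : 𝕜)).const_mul d).const_sub Λ
  refine (hasDerivAt_mul_div_mul (hasDerivAt_sub_mul_pow_zero Λ c (n := 2 * 0 + 5) (by omega))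
    hlin (hasDerivAt_sub_mul_pow_zero Λ c (n := 2 * 0 + 3) (by omega))
    (hasDerivAt_sub_mul_pow_zero Λ d (n := 2 * 0 + 3) (by omega))
    (by simp) (by simp) (by simp) (by simp) hΛ).congr_deriv ?_
  ring

lemma hasDerivAt_innerFactor_succ (hΛ : Λ ≠ 0) (k : ℕ) :
    HasDerivAt (innerFactor c d Λ (k + 1)) 0 0 := by
  refine (hasDerivAt_mul_div_mul
    (hasDerivAt_sub_mul_pow_zero Λ c (n := 2 * (k + 1) + 5) (by omega))
    (hasDerivAt_sub_mul_pow_zero Λ d (n := 2 * (k + 1) + 1) (by omega))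
    (hasDerivAt_sub_mul_pow_zero Λ c (n := 2 * (k + 1) + 3) (by omega))
    (hasDerivAt_sub_mul_pow_zero Λ d (n := 2 * (k + 1) + 3) (by omega))
    (by simp) (by simp) (by simp) (by simp) hΛ).congr_deriv ?_
  simp

lemma topFactor_apply_zero (hΛ : Λ ≠ 0) : topFactor c d Λ 0 = -d / Λ := by
  simp only [topFactor, zero_pow three_ne_zero, mul_zero, sub_zero, zero_mul, zero_sub]
  field_simp

lemma hasDerivAt_topFactor (hΛ : Λ ≠ 0) :
    HasDerivAt (topFactor c d Λ) (1 - (c * d + d ^ 2) / Λ ^ 2) 0 := by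
  have h₁ := hasDerivAt_sub_mul_pow_zero Λ c (n := 3) (by omega)
  have h₂ : HasDerivAt (fun z : 𝕜 => z * Λ - d) Λ 0 := by
    simpa using ((hasDerivAt_id (0 : 𝕜)).mul_const Λ).sub_const d
  have h₃ : HasDerivAt (fun z : 𝕜 => Λ - c * z) (-c) 0 := by
    simpa using ((hasDerivAt_id (0 : 𝕜)).const_mul c).const_sub Λ
  have h₄ : HasDerivAt (fun z : 𝕜 => Λ - d * z) (-d) 0 := by
    simpa using ((hasDerivAt_id (0 : 𝕜)).const_mul d).const_sub Λ
  refine ((h₁.fun_mul h₂).fun_div (h₃.fun_mul h₄) (by simp [hΛ])).congr_deriv ?_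
  simp only [zero_pow three_ne_zero, zero_mul, mul_zero, sub_zero, zero_sub]
  field_simp
  ring

end Factors

variable {c d : 𝕜} {Λ : ℕ → 𝕜} {M : ℕ}

lemma prod_innerFactor_apply_zero (hΛ : ∀ i ∈ Finset.Icc 1 (M + 2), Λ i ≠ 0) :
    ∏ i ∈ Finset.Icc 1 (M + 1), innerFactor c d (Λ i) (M + 1 - i) 0 = 1 :=
  Finset.prod_eq_one fun i hi =>
    innerFactor_apply_zero (hΛ i (Finset.Icc_subset_Icc_right (by omega) hi)) _

lemma hasDerivAt_prod_innerFactor (hΛ : ∀ i ∈ Finset.Icc 1 (M + 2), Λ i ≠ 0) :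
    HasDerivAt (fun z => ∏ i ∈ Finset.Icc 1 (M + 1), innerFactor c d (Λ i) (M + 1 - i) z)
      (-d / Λ (M + 1)) 0 := by
  have hΛ' : ∀ i ∈ Finset.Icc 1 M, Λ i ≠ 0 := fun i hi =>
    hΛ i (Finset.Icc_subset_Icc_right (by omega) hi)
  have hlower : HasDerivAt (fun z => ∏ i ∈ Finset.Icc 1 M, innerFactor c d (Λ i) (M + 1 - i) z)
      0 0 := by
    simpa using HasDerivAt.fun_finsetProd (u := Finset.Icc 1 M) (x := 0)
      (f := fun i => innerFactor c d (Λ i) (M + 1 - i)) (f' := fun _ => 0) fun i hi => by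
      obtain ⟨j, hj⟩ : ∃ j, M + 1 - i = j + 1 := ⟨M - i, by grind⟩
      rw [hj]
      exact hasDerivAt_innerFactor_succ (hΛ' i hi) j
  have htop : HasDerivAt (innerFactor c d (Λ (M + 1)) (M + 1 - (M + 1))) (-d / Λ (M + 1)) 0 := by
    simpa using hasDerivAt_innerFactor_zero (c := c) (d := d) (hΛ (M + 1) (by simp))
  simp_rw [Finset.prod_Icc_succ_top (by omega : 1 ≤ M + 1)]
  refine (hlower.fun_mul htop).congr_deriv ?_
  simp [Finset.prod_eq_one fun i hi => innerFactor_apply_zero (hΛ' i hi) _]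

lemma rescaledProduct_apply_zero (hΛ : ∀ i ∈ Finset.Icc 1 (M + 2), Λ i ≠ 0) :
    rescaledProduct c d Λ M 0 = -d / Λ (M + 2) := by
  rw [rescaledProduct, prod_innerFactor_apply_zero hΛ, one_mul,
    topFactor_apply_zero (hΛ (M + 2) (by simp))]

lemma hasDerivAt_rescaledProduct (hΛ : ∀ i ∈ Finset.Icc 1 (M + 2), Λ i ≠ 0) :
    HasDerivAt (rescaledProduct c d Λ M)
      (d ^ 2 / (Λ (M + 1) * Λ (M + 2)) + 1 - (c * d + d ^ 2) / Λ (M + 2) ^ 2) 0 := by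
  have hM2 : Λ (M + 2) ≠ 0 := hΛ (M + 2) (by simp)
  refine ((hasDerivAt_prod_innerFactor hΛ).fun_mul (hasDerivAt_topFactor hM2)).congr_deriv ?_
  rw [prod_innerFactor_apply_zero hΛ, topFactor_apply_zero hM2]
  field_simp
  ring

lemma tendsto_rescaledProduct_add_neg_div (hΛ : ∀ i ∈ Finset.Icc 1 (M + 2), Λ i ≠ 0) :
    Tendsto (fun z => (rescaledProduct c d Λ M z + rescaledProduct (-c) (-d) Λ M z) / z)
      (𝓝[≠] 0)
      (𝓝 (2 * (d ^ 2 / (Λ (M + 1) * Λ (M + 2)) + 1 - (c * d + d ^ 2) / Λ (M + 2) ^ 2))) := by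
  have h := ((hasDerivAt_rescaledProduct (c := c) (d := d) hΛ).fun_add
    (hasDerivAt_rescaledProduct (c := -c) (d := -d) hΛ)).tendsto_slope_zero
  simp only [zero_add, rescaledProduct_apply_zero hΛ, smul_eq_mul] at h
  convert h using 2 with z <;> ring

end Derivative

section Substitution

lemma ofReal_rpow_eq_inv_pow {t : ℝ} (ht : 0 < t) {a : ℝ} {n : ℕ} (h : a = n / 2) :
    ((t ^ a : ℝ) : ℂ) = (((t ^ (-(1 / 2) : ℝ) : ℝ) : ℂ) ^ n)⁻¹ := by
  rw [← Complex.ofReal_pow, ← Complex.ofReal_inv, ← Real.rpow_natCast,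
    ← Real.rpow_mul ht.le, ← Real.rpow_neg ht.le, h]
  ring_nf

lemma prod_eq_rescaledProduct_div (M : ℕ) (Λ : ℕ → ℂ) (c d : ℂ) {t : ℝ} (ht : 0 < t) :
    ∏ i ∈ Finset.Icc 1 (M + 2),
      ((((t ^ (((M + 2 : ℕ) : ℝ) + 3 / 2 - (i : ℝ)) : ℝ) : ℂ) * Λ i - c) /
          (((t ^ (((M + 2 : ℕ) : ℝ) + 1 / 2 - (i : ℝ)) : ℝ) : ℂ) * Λ i - c)) *
        ((((t ^ (((M + 2 : ℕ) : ℝ) - 1 / 2 - (i : ℝ)) : ℝ) : ℂ) * Λ i - d) /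
          (((t ^ (((M + 2 : ℕ) : ℝ) + 1 / 2 - (i : ℝ)) : ℝ) : ℂ) * Λ i - d)) =
      rescaledProduct c d Λ M ((t ^ (-(1 / 2) : ℝ) : ℝ) : ℂ) /
        ((t ^ (-(1 / 2) : ℝ) : ℝ) : ℂ) := by
  set s : ℂ := ((t ^ (-(1 / 2) : ℝ) : ℝ) : ℂ)
  have hs : s ≠ 0 := Complex.ofReal_ne_zero.mpr (Real.rpow_pos_of_pos ht _).ne'
  rw [Finset.prod_Icc_succ_top (by omega), rescaledProduct, mul_div_assoc]
  congr 1
  · refine Finset.prod_congr rfl fun i hi => ?_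
    have hi : i ≤ M + 1 := (Finset.mem_Icc.mp hi).2
    rw [← innerFactor_eq hs]
    congr 4 <;> refine ofReal_rpow_eq_inv_pow ht ?_ <;> push_cast [Nat.cast_sub hi] <;> ring
  · rw [← topFactor_eq hs]
    congr 4
    · exact ofReal_rpow_eq_inv_pow ht (by push_cast; ring)
    · exact ofReal_rpow_eq_inv_pow ht (by push_cast; ring)
    · rw [show ((M + 2 : ℕ) : ℝ) - 1 / 2 - ((M + 1 + 1 : ℕ) : ℝ) = -(1 / 2) by push_cast; ring]
    · exact ofReal_rpow_eq_inv_pow ht (by push_cast; ring)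

lemma tendsto_ofReal_rpow_neg_nhdsNE {r : ℝ} (hr : 0 < r) :
    Tendsto (fun t : ℝ => ((t ^ (-r) : ℝ) : ℂ)) atTop (𝓝[≠] 0) := by
  refine tendsto_nhdsWithin_iff.mpr ⟨?_, ?_⟩
  · simpa [Function.comp_def] using
      (Complex.continuous_ofReal.tendsto 0).comp (tendsto_rpow_neg_atTop hr)
  · filter_upwards [eventually_gt_atTop 0] with t ht
    exact Complex.ofReal_ne_zero.mpr (Real.rpow_pos_of_pos ht _).ne'

end Substitution

end PieriConstantTerm

open PieriConstantTerm

/-- The `t → ∞` limit of the constant term `G^{(B_N^{(1)})}(Λ)` of the first Pieri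
operator of type `B_N^{(1)}`: with `q = w²` (so `w` plays the role of `q^{1/2}`) and
`G(t) = -1 + (1/2) ∑_{ε=±1} ∏_{i=1}^N [(t^{N+3/2-i} Λ_i - εw)/(t^{N+1/2-i} Λ_i - εw)] ·
  [(t^{N-1/2-i} Λ_i - εw⁻¹)/(t^{N+1/2-i} Λ_i - εw⁻¹)]`,
one has `G(t) → q⁻¹/(Λ_{N-1} Λ_N) - (1 + q⁻¹)/Λ_N²` as `t → +∞`. -/
theorem pieri_constant_term_limit_B (N : ℕ) (hN : 2 ≤ N) (w : ℂ) (hw : w ≠ 0)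
    (Λ : ℕ → ℂ) (hΛ : ∀ i ∈ Finset.Icc 1 N, Λ i ≠ 0) :
    Tendsto (fun t : ℝ =>
        -1 + (1 / 2 : ℂ) *
          ∑ ε ∈ ({1, -1} : Finset ℤ),
            ∏ i ∈ Finset.Icc 1 N,
              ((((t ^ ((N : ℝ) + 3 / 2 - (i : ℝ)) : ℝ) : ℂ) * Λ i - (ε : ℂ) * w) /
                  (((t ^ ((N : ℝ) + 1 / 2 - (i : ℝ)) : ℝ) : ℂ) * Λ i - (ε : ℂ) * w)) *
                ((((t ^ ((N : ℝ) - 1 / 2 - (i : ℝ)) : ℝ) : ℂ) * Λ i - (ε : ℂ) * w⁻¹) /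
                  (((t ^ ((N : ℝ) + 1 / 2 - (i : ℝ)) : ℝ) : ℂ) * Λ i - (ε : ℂ) * w⁻¹)))
      atTop
      (𝓝 ((w ^ 2)⁻¹ / (Λ (N - 1) * Λ N) - (1 + (w ^ 2)⁻¹) / Λ N ^ 2)) := by
  obtain ⟨M, rfl⟩ : ∃ M, N = M + 2 := ⟨N - 2, by omega⟩
  have hlim := (((tendsto_rescaledProduct_add_neg_div (c := w) (d := w⁻¹) hΛ).comp
    (tendsto_ofReal_rpow_neg_nhdsNE (by norm_num : (0 : ℝ) < 1 / 2))).const_mul (1 / 2)).const_add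
    (-1)
  have hM2 : Λ (M + 2) ≠ 0 := hΛ (M + 2) (by simp)
  rw [show M + 2 - 1 = M + 1 from rfl]
  convert hlim.congr' ?_ using 2
  · field_simp
    ring
  · filter_upwards [eventually_gt_atTop 0] with t ht
    rw [Finset.sum_pair (by decide), prod_eq_rescaledProduct_div M Λ _ _ ht,
      prod_eq_rescaledProduct_div M Λ _ _ ht]
    simp only [Function.comp_apply, Int.cast_one, Int.cast_neg, one_mul, neg_one_mul]
    ring
end

section
/- Let N ≥ 1 and let q be a real number with 0 < q and q ≠ 1. Define Cherednik's Gaussian γ(x) := exp( Σ_{i=1}^N (log x_i)² / (2 log q) ) for x ∈ (0,∞)^N, and for I ⊆ {1,…,N} let q^{χ_I} x denote the point whose j-th coordinate is q x_j if j ∈ I and x_j otherwise. Then for every a ∈ {1,…,N}, every k ∈ ℤ, every function f : (0,∞)^N → ℂ, and every x ∈ (0,∞)^N with pairwise distinct coordinates: γ(x)^{−k} · Σ_{I ⊆ {1,…,N}, |I| = a} ( ∏_{i∈I} ∏_{j∉I} x_i/(x_i − x_j) ) · γ(q^{χ_I} x)^k · f(q^{χ_I} x) = q^{ak/2} · Σ_{I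 ⊆ {1,…,N}, |I| = a} ( ∏_{i∈I} x_i^k ) · ( ∏_{i∈I} ∏_{j∉I} x_i/(x_i − x_j) ) · f(q^{χ_I} x), where q^{ak/2} = exp(ak·(log q)/2). In other words, the generalized q-Whittaker operator D_{a;k} equals q^{−ak/2} γ^{−k} ∘ D_{a;0} ∘ γ^{k}, i.e. conjugation by the Gaussian realizes the τ₊-translation of the type-A Macdonald operators in the q-Whittaker limit. -/
open scoped BigOperators

noncomputable section

/-- Cherednik's Gaussian `γ(x) = exp(∑_{i=1}^N (log x_i)²/(2 log q))` on `(0,∞)^N`. -/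
noncomputable def gaussian (N : ℕ) (q : ℝ) (x : Fin N → ℝ) : ℝ :=
  Real.exp (∑ i : Fin N, Real.log (x i) ^ 2 / (2 * Real.log q))

/-- The point `q^{χ_I} x`, whose `j`-th coordinate is `q x_j` if `j ∈ I` and `x_j`
otherwise. -/
noncomputable def qShift (N : ℕ) (q : ℝ) (I : Finset (Fin N)) (x : Fin N → ℝ) :
    Fin N → ℝ :=
  fun j => if j ∈ I then q * x j else x j

lemma gaussian_qShift (N : ℕ) (q : ℝ) (hq0 : 0 < q) (hq1 : q ≠ 1)
    (I : Finset (Fin N)) (x : Fin N → ℝ) (hx : ∀ i, 0 < x i) :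
    gaussian N q (qShift N q I x) =
      gaussian N q x *
        Real.exp ((∑ i ∈ I, Real.log (x i)) + (I.card : ℝ) * Real.log q / 2) := by
  have hL : Real.log q ≠ 0 := Real.log_ne_zero_of_pos_of_ne_one hq0 hq1
  unfold gaussian qShift
  rw [← Real.exp_add]
  congr 1
  have hsplit : ∀ (g : Fin N → ℝ), ∑ i : Fin N, g i = ∑ i ∈ I, g i + ∑ i ∈ Iᶜ, g i := by
    intro g
    rw [Finset.sum_add_sum_compl]
  rw [hsplit, hsplit (fun i => Real.log (x i) ^ 2 / (2 * Real.log q))]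
  have h2 : ∑ i ∈ Iᶜ, Real.log (if i ∈ I then q * x i else x i) ^ 2 / (2 * Real.log q)
      = ∑ i ∈ Iᶜ, Real.log (x i) ^ 2 / (2 * Real.log q) := by
    apply Finset.sum_congr rfl
    intro i hi
    rw [Finset.mem_compl] at hi
    simp [hi]
  rw [h2]
  have h1 : ∑ i ∈ I, Real.log (if i ∈ I then q * x i else x i) ^ 2 / (2 * Real.log q)
      = ∑ i ∈ I, (Real.log (x i) ^ 2 / (2 * Real.log q) + (Real.log (x i) + Real.log q / 2)) := by
    apply Finset.sum_congr rfl
    intro i hi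
    rw [if_pos hi, Real.log_mul (ne_of_gt hq0) (ne_of_gt (hx i))]
    field_simp
    ring
  rw [h1, Finset.sum_add_distrib, Finset.sum_add_distrib, Finset.sum_const, nsmul_eq_mul]
  ring

/-- Conjugation by Cherednik's Gaussian realizes the `τ₊`-translation of the type-A
Macdonald operators in the q-Whittaker limit: for all `a ∈ {1,…,N}`, `k ∈ ℤ`,
`f : (0,∞)^N → ℂ` and `x` with pairwise distinct positive coordinates,
`γ(x)^{-k} ∑_{|I|=a} (∏_{i∈I}∏_{j∉I} x_i/(x_i-x_j)) γ(q^{χ_I}x)^k f(q^{χ_I}x)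
  = q^{ak/2} ∑_{|I|=a} (∏_{i∈I} x_i^k)(∏_{i∈I}∏_{j∉I} x_i/(x_i-x_j)) f(q^{χ_I}x)`,
where `q^{ak/2} = exp(ak (log q)/2)`; that is,
`D_{a;k} = q^{-ak/2} γ^{-k} ∘ D_{a;0} ∘ γ^{k}`. -/
theorem gaussian_conjugation (N : ℕ) (hN : 1 ≤ N) (q : ℝ) (hq0 : 0 < q) (hq1 : q ≠ 1)
    (a : ℕ) (ha1 : 1 ≤ a) (haN : a ≤ N) (k : ℤ) (f : (Fin N → ℝ) → ℂ)
    (x : Fin N → ℝ) (hx : ∀ i, 0 < x i) (hdist : Function.Injective x) :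
    ((gaussian N q x ^ (-k) : ℝ) : ℂ) *
        ∑ I ∈ Finset.powersetCard a (Finset.univ : Finset (Fin N)),
          (((∏ i ∈ I, ∏ j ∈ Finset.univ \ I, x i / (x i - x j)) *
              gaussian N q (qShift N q I x) ^ k : ℝ) : ℂ) *
            f (qShift N q I x) =
      ((Real.exp ((a : ℝ) * (k : ℝ) * Real.log q / 2) : ℝ) : ℂ) *
        ∑ I ∈ Finset.powersetCard a (Finset.univ : Finset (Fin N)),
          (((∏ i ∈ I, x i ^ k) *
              ∏ i ∈ I, ∏ j ∈ Finset.univ \ I, x i / (x i - x j) : ℝ) : ℂ) *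
            f (qShift N q I x) := by
  rw [Finset.mul_sum, Finset.mul_sum]
  apply Finset.sum_congr rfl
  intro I hI
  rw [Finset.mem_powersetCard] at hI
  rw [← mul_assoc, ← mul_assoc]
  congr 1
  have hg : (0:ℝ) < gaussian N q x := Real.exp_pos _
  rw [gaussian_qShift N q hq0 hq1 I x hx, mul_zpow]
  norm_cast
  have hgk : gaussian N q x ^ (-k) * gaussian N q x ^ k = 1 := by
    rw [← zpow_add₀ (ne_of_gt hg)]; simp
  have key : Real.exp ((∑ i ∈ I, Real.log (x i)) + (I.card : ℝ) * Real.log q / 2) ^ k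
      = (∏ i ∈ I, x i ^ k) * Real.exp ((a : ℝ) * (k:ℝ) * Real.log q / 2) := by
    rw [← Real.rpow_intCast, Real.rpow_def_of_pos (Real.exp_pos _), Real.log_exp]
    have hexp : ((∑ i ∈ I, Real.log (x i)) + (I.card : ℝ) * Real.log q / 2) * (k : ℝ)
        = (∑ i ∈ I, (k:ℝ) * Real.log (x i)) + (a : ℝ) * (k:ℝ) * Real.log q / 2 := by
      rw [hI.2, ← Finset.mul_sum]
      ring
    rw [hexp, Real.exp_add, Real.exp_sum]
    congr 1
    apply Finset.prod_congr rfl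
    intro i _
    rw [mul_comm, ← Real.rpow_def_of_pos (hx i), Real.rpow_intCast]
  rw [key]
  push_cast
  linear_combination ((∏ i ∈ I, ∏ j ∈ Finset.univ \ I, x i / (x i - x j)) *
      ((∏ i ∈ I, x i ^ k) * Real.exp ((a : ℝ) * (k:ℝ) * Real.log q / 2))) * hgk
end
end

section
/- Let N ≥ 2, let q, t ∈ ℂ∖{0} with |q| < 1, and let x_1,…,x_N ∈ ℂ∖{0} be such that for all 1 ≤ i < j ≤ N and all integers n ≥ 0 one has x_i ≠ q^n x_j and t x_i ≠ q^n x_j. Define the absolutely convergent infinite product Δ(x) := ∏_{1 ≤ i < j ≤ N} ∏_{n ≥ 1} (1 − q^n x_j/x_i) / (1 − t^{−1} q^n x_j/x_i). Then for every a ∈ {1,…,N}: Δ(x) · ∏_{1 ≤ i ≤ a < j ≤ N} (1 − x_j/x_i) = Δ(x^{(a)}) · ∏_{1 ≤ i ≤ a < j ≤ N} (1 − x_j/(t x_i)), where x^{(a)} = (q x_1, …, q x_a, x_{a+1}, …, x_N). (This says that the type-A infinite product Δ(x) satisfies the system of q-difference equations characterizing the leading coefficient of the universal Macdonald solution, the key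 step in proving P(x;s) = Δ(x) Q(s;x).) -/
open scoped BigOperators

noncomputable section

/-- The type-`A_{N-1}^{(1)}` infinite product
`Δ(x) = ∏_{1≤i<j≤N} ∏_{n≥1} (1 - qⁿ x_j/x_i)/(1 - t⁻¹ qⁿ x_j/x_i)`,
absolutely convergent for `|q| < 1` under the stated nonvanishing hypotheses. -/
noncomputable def DeltaA (N : ℕ) (q t : ℂ) (x : ℕ → ℂ) : ℂ :=
  ∏ i ∈ Finset.Icc 1 N, ∏ j ∈ Finset.Icc (i + 1) N,
    ∏' n : ℕ, (1 - q ^ (n + 1) * x j / x i) / (1 - t⁻¹ * q ^ (n + 1) * x j / x i)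

/-!
Only the factors of `Δ` with `i ≤ a < j` notice the substitution `x ↦ x^{(a)}`: all the others
depend on `x_j / x_i` alone. For those factors the substitution turns `∏_{n ≥ 1}` into
`∏_{n ≥ 0}`, and splitting off the new `n = 0` factor `(1 - x_j/x_i) / (1 - x_j/(t x_i))` gives
`Δ(x^{(a)}) = Δ(x) ∏_{i ≤ a < j} (1 - x_j/x_i) / (1 - x_j/(t x_i))`. Splitting off a factor is
legitimate because both `∏ (1 - u qⁿ)` and `∏ (1 - v qⁿ)` converge (`∑ ‖q‖ⁿ < ∞`) and the
second one does not vanish.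
-/

open Finset

section GeometricProducts

variable {𝕜 : Type*} [NormedField 𝕜] {q : 𝕜}

lemma summable_norm_mul_pow_succ (c : 𝕜) (hq : ‖q‖ < 1) :
    Summable fun n : ℕ => ‖c * q ^ (n + 1)‖ := by
  simp only [norm_mul, norm_pow]
  exact ((summable_nat_add_iff 1).mpr (summable_geometric_of_lt_one (norm_nonneg q) hq)).mul_left _

variable [CompleteSpace 𝕜]

lemma multipliable_one_sub_mul_pow_succ (c : 𝕜) (hq : ‖q‖ < 1) :
    Multipliable fun n : ℕ => 1 - c * q ^ (n + 1) := by
  simpa only [sub_eq_add_neg] using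
    multipliable_one_add_of_summable (f := fun n : ℕ => -(c * q ^ (n + 1)))
      (by simpa only [norm_neg] using summable_norm_mul_pow_succ c hq)

lemma tprod_one_sub_mul_pow_succ_ne_zero (c : 𝕜) (hq : ‖q‖ < 1)
    (hc : ∀ n : ℕ, 1 - c * q ^ (n + 1) ≠ 0) : ∏' n : ℕ, (1 - c * q ^ (n + 1)) ≠ 0 := by
  simp only [sub_eq_add_neg] at hc ⊢
  exact tprod_one_add_ne_zero_of_summable hc
    (by simpa only [norm_neg] using summable_norm_mul_pow_succ c hq)

lemma multipliable_one_sub_mul_pow_succ_div (u v : 𝕜) (hq : ‖q‖ < 1)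
    (hv : ∀ n : ℕ, 1 - v * q ^ (n + 1) ≠ 0) :
    Multipliable fun n : ℕ => (1 - u * q ^ (n + 1)) / (1 - v * q ^ (n + 1)) :=
  (multipliable_one_sub_mul_pow_succ u hq).div₀ (multipliable_one_sub_mul_pow_succ v hq)
    (tprod_one_sub_mul_pow_succ_ne_zero v hq hv)

lemma tprod_one_sub_mul_pow_div_eq (u v : 𝕜) (hq : ‖q‖ < 1)
    (hv : ∀ n : ℕ, 1 - v * q ^ (n + 1) ≠ 0) :
    ∏' n : ℕ, (1 - u * q ^ n) / (1 - v * q ^ n) =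
      (1 - u) / (1 - v) * ∏' n : ℕ, (1 - u * q ^ (n + 1)) / (1 - v * q ^ (n + 1)) := by
  rw [tprod_eq_zero_mul' (f := fun n : ℕ => (1 - u * q ^ n) / (1 - v * q ^ n))
    (multipliable_one_sub_mul_pow_succ_div u v hq hv), pow_zero, mul_one, mul_one]

end GeometricProducts

lemma prod_Icc_prod_Icc_ite_le_lt {M : Type*} [CommMonoid M] (g : ℕ → ℕ → M) (N a : ℕ) :
    ∏ i ∈ Icc 1 N, ∏ j ∈ Icc (i + 1) N, (if i ≤ a ∧ a < j then g i j else 1) =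
      ∏ i ∈ Icc 1 a, ∏ j ∈ Icc (a + 1) N, g i j := by
  calc _ = ∏ i ∈ Icc 1 N, if i ≤ a then ∏ j ∈ Icc (a + 1) N, g i j else 1 := by
        refine prod_congr rfl fun i _ => ?_
        split_ifs with hia
        · simp only [hia, true_and, ← prod_filter]
          congr 1
          ext j
          simp only [mem_filter, mem_Icc]
          omega
        · exact prod_eq_one fun j _ => if_neg fun h => hia h.1
    _ = ∏ i ∈ Icc 1 N with i ≤ a, ∏ j ∈ Icc (a + 1) N, g i j := (prod_filter _ _).symm
    _ = _ := by
        refine prod_subset (fun i => by simp only [mem_filter, mem_Icc]; omega) fun i hi hout => ?_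
        have hempty : Icc (a + 1) N = ∅ := by
          simp only [mem_filter, mem_Icc] at hi hout
          exact Icc_eq_empty (by omega)
        rw [hempty, prod_empty]

def deltaFactor (q t xi xj : ℂ) : ℂ :=
  ∏' n : ℕ, (1 - q ^ (n + 1) * xj / xi) / (1 - t⁻¹ * q ^ (n + 1) * xj / xi)

lemma DeltaA_eq_prod_deltaFactor (N : ℕ) (q t : ℂ) (x : ℕ → ℂ) :
    DeltaA N q t x = ∏ i ∈ Icc 1 N, ∏ j ∈ Icc (i + 1) N, deltaFactor q t (x i) (x j) :=
  rfl

lemma deltaFactor_mul_mul {c : ℂ} (hc : c ≠ 0) (q t xi xj : ℂ) :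
    deltaFactor q t (c * xi) (c * xj) = deltaFactor q t xi xj := by
  simp only [deltaFactor, mul_left_comm _ c, mul_div_mul_left _ _ hc]

lemma one_sub_inv_mul_div_ne_zero {K : Type*} [Field K] {t xi y : K} (ht : t ≠ 0) (hxi : xi ≠ 0) (h : t * xi ≠ y) :
    1 - t⁻¹ * y / xi ≠ 0 := by
  rw [sub_ne_zero, ne_comm, Ne, div_eq_one_iff_eq hxi, inv_mul_eq_iff_eq_mul₀ ht]
  exact fun h' => h h'.symm

lemma deltaFactor_q_mul_left {q : ℂ} (hq0 : q ≠ 0) (hq : ‖q‖ < 1) {t xi xj : ℂ} (ht : t ≠ 0)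
    (hxi : xi ≠ 0) (hsep : ∀ n : ℕ, t * xi ≠ q ^ n * xj) :
    deltaFactor q t (q * xi) xj = (1 - xj / xi) / (1 - t⁻¹ * xj / xi) * deltaFactor q t xi xj := by
  have hshift : ∀ n : ℕ, (1 - q ^ (n + 1) * xj / (q * xi)) / (1 - t⁻¹ * q ^ (n + 1) * xj / (q * xi))
      = (1 - xj / xi * q ^ n) / (1 - t⁻¹ * xj / xi * q ^ n) := by
    intro n
    rw [pow_succ]
    field_simp
  have hv : ∀ n : ℕ, 1 - t⁻¹ * xj / xi * q ^ (n + 1) ≠ 0 := fun n => by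
    simpa only [mul_div_right_comm, mul_assoc, mul_comm xj] using
      one_sub_inv_mul_div_ne_zero ht hxi (hsep (n + 1))
  rw [deltaFactor, tprod_congr hshift, tprod_one_sub_mul_pow_div_eq _ _ hq hv, deltaFactor]
  congr 2
  funext n
  ring

lemma DeltaA_q_mul_of_le {N : ℕ} {q : ℂ} (hq0 : q ≠ 0) (hq : ‖q‖ < 1) {t : ℂ} (ht : t ≠ 0)
    {x : ℕ → ℂ} (hx : ∀ i ∈ Icc 1 N, x i ≠ 0)
    (hsep : ∀ i ∈ Icc 1 N, ∀ j ∈ Icc 1 N, i < j → ∀ n : ℕ, t * x i ≠ q ^ n * x j) (a : ℕ) :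
    DeltaA N q t (fun i => if i ≤ a then q * x i else x i) =
      (∏ i ∈ Icc 1 a, ∏ j ∈ Icc (a + 1) N, (1 - x j / x i) / (1 - t⁻¹ * x j / x i)) *
        DeltaA N q t x := by
  rw [← prod_Icc_prod_Icc_ite_le_lt, DeltaA_eq_prod_deltaFactor, DeltaA_eq_prod_deltaFactor,
    ← prod_mul_distrib]
  refine prod_congr rfl fun i hi => ?_
  rw [← prod_mul_distrib]
  refine prod_congr rfl fun j hj => ?_
  simp only [mem_Icc] at hi hj
  by_cases hja : j ≤ a
  · rw [if_pos hja, if_pos (by omega), if_neg (by omega), one_mul, deltaFactor_mul_mul hq0]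
  by_cases hia : i ≤ a
  · rw [if_neg hja, if_pos hia, if_pos (by omega)]
    exact deltaFactor_q_mul_left hq0 hq ht (hx i (mem_Icc.2 hi))
      (hsep i (mem_Icc.2 hi) j (mem_Icc.2 (by omega)) (by omega))
  · rw [if_neg hja, if_neg hia, if_neg (by omega), one_mul]

theorem DeltaA_q_difference_general (N : ℕ) (q t : ℂ) (hq0 : q ≠ 0)
    (hq : ‖q‖ < 1) (ht : t ≠ 0) (x : ℕ → ℂ)
    (hx : ∀ i ∈ Finset.Icc 1 N, x i ≠ 0)
    (hsep : ∀ i ∈ Finset.Icc 1 N, ∀ j ∈ Finset.Icc 1 N, i < j → ∀ n : ℕ,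
      x i ≠ q ^ n * x j ∧ t * x i ≠ q ^ n * x j)
    (a : ℕ) :
    DeltaA N q t x *
        ∏ i ∈ Finset.Icc 1 a, ∏ j ∈ Finset.Icc (a + 1) N, (1 - x j / x i) =
      DeltaA N q t (fun i => if i ≤ a then q * x i else x i) *
        ∏ i ∈ Finset.Icc 1 a, ∏ j ∈ Finset.Icc (a + 1) N, (1 - x j / (t * x i)) := by
  have hsep' := fun i hi j hj hij n => (hsep i hi j hj hij n).2
  have hratio : (∏ i ∈ Icc 1 a, ∏ j ∈ Icc (a + 1) N, (1 - x j / x i) / (1 - t⁻¹ * x j / x i)) *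
      ∏ i ∈ Icc 1 a, ∏ j ∈ Icc (a + 1) N, (1 - x j / (t * x i)) =
      ∏ i ∈ Icc 1 a, ∏ j ∈ Icc (a + 1) N, (1 - x j / x i) := by
    rw [← prod_mul_distrib]
    refine prod_congr rfl fun i hi => ?_
    rw [← prod_mul_distrib]
    refine prod_congr rfl fun j hj => ?_
    simp only [mem_Icc] at hi hj
    have hi' : i ∈ Icc 1 N := mem_Icc.2 ⟨hi.1, by omega⟩
    have hden := one_sub_inv_mul_div_ne_zero ht (hx i hi')
      (by simpa using hsep' i hi' j (mem_Icc.2 ⟨by omega, hj.2⟩) (by omega) 0)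
    rw [div_mul_eq_mul_div, show x j / (t * x i) = t⁻¹ * x j / x i by ring,
      mul_div_cancel_right₀ _ hden]
  rw [DeltaA_q_mul_of_le hq0 hq ht hx hsep' a, ← hratio]
  ring

/-- The infinite product `Δ(x)` satisfies the system of q-difference equations
characterizing the leading coefficient of the universal Macdonald solution: for every
`a ∈ {1,…,N}`,
`Δ(x) ∏_{1≤i≤a<j≤N} (1 - x_j/x_i) = Δ(x^{(a)}) ∏_{1≤i≤a<j≤N} (1 - x_j/(t x_i))`,
where `x^{(a)} = (q x_1, …, q x_a, x_{a+1}, …, x_N)`. -/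
theorem DeltaA_q_difference (N : ℕ) (hN : 2 ≤ N) (q t : ℂ) (hq0 : q ≠ 0)
    (hq : ‖q‖ < 1) (ht : t ≠ 0) (x : ℕ → ℂ)
    (hx : ∀ i ∈ Finset.Icc 1 N, x i ≠ 0)
    (hsep : ∀ i ∈ Finset.Icc 1 N, ∀ j ∈ Finset.Icc 1 N, i < j → ∀ n : ℕ,
      x i ≠ q ^ n * x j ∧ t * x i ≠ q ^ n * x j)
    (a : ℕ) (ha1 : 1 ≤ a) (haN : a ≤ N) :
    DeltaA N q t x *
        ∏ i ∈ Finset.Icc 1 a, ∏ j ∈ Finset.Icc (a + 1) N, (1 - x j / x i) =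
      DeltaA N q t (fun i => if i ≤ a then q * x i else x i) *
        ∏ i ∈ Finset.Icc 1 a, ∏ j ∈ Finset.Icc (a + 1) N, (1 - x j / (t * x i)) :=
  DeltaA_q_difference_general N q t hq0 hq ht x hx hsep a
end
end

section
/- Let N ≥ 1 and let F = ℚ(t, x_1, …, x_N) be the field of rational functions. Define x̂_j := x_j for 1 ≤ j ≤ N and x̂_j := x_{2N+1−j}^{−1} for N+1 ≤ j ≤ 2N, and for i ∈ {1,…,N} set ι(i,+1) := i and ι(i,−1) := 2N+1−i. Then for every i ∈ {1,…,N} and every ε ∈ {+1, −1}, the following identity holds in F: ∏_{j=1,…,2N, j ≠ ι(i,ε)} (t x̂_{ι(i,ε)} − x̂_j)/(x̂_{ι(i,ε)} − x̂_j) = [(1 − t x_i^{2ε})/(1 − x_i^{2ε})] · ∏_{j≠i, 1 ≤ j ≤ N} [(1 − t x_i^{ε} x_j)/(1 − x_i^{ε} x_j)] · [(t x_i^{ε} − x_j)/(x_i^{ε} − x_j)]. (This expresses that the folding specialization x_{2N+1−i} = x_i^{−1}, Γ_{2N+1−i} = Γ_i^{−1} maps the first Macdonald operator of type A_{2N−1}^{(1)}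 to the first Macdonald operator of type A_{2N−1}^{(2)}.) -/
/-!
The folded variables pair up under `j ↦ 2N+1-j` as `x_j` and `x_j⁻¹`, and `y := x̂_{ι(i,ε)} = x_i^ε`
has partner `y⁻¹`. Removing `ι(i,ε)` from `{1, …, 2N}`, the product therefore splits into the factor
at `y⁻¹` and, for each `j ≠ i`, the factors at `x_j` and `x_j⁻¹`. Every factor at an inverse `z⁻¹`
becomes `(1 - t y z)/(1 - y z)` after multiplying numerator and denominator by `-z`; for `z = y`
this is the factor `(1 - t y²)/(1 - y²)`. Multiplying by `-z ≠ 0` needs no hypothesis on the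
denominators, since Lean's division makes both sides vanish together.
-/

open scoped BigOperators

noncomputable section

/-- The field `ℚ(t, x_1, …, x_N)` of rational functions in `N + 1` indeterminates. -/
abbrev FoldField (N : ℕ) : Type :=
  FractionRing (MvPolynomial (Fin (N + 1)) ℚ)

/-- The indeterminate `t` (index `0`). -/
noncomputable def tVar (N : ℕ) : FoldField N :=
  algebraMap (MvPolynomial (Fin (N + 1)) ℚ) (FoldField N) (MvPolynomial.X 0)

open Fin.NatCast in
/-- The indeterminates `x_1, …, x_N` (indices `1, …, N`). -/
noncomputable def xVar (N : ℕ) (j : ℕ) : FoldField N :=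
  algebraMap (MvPolynomial (Fin (N + 1)) ℚ) (FoldField N) (MvPolynomial.X (j : Fin (N + 1)))

/-- The folded variables `x̂_j = x_j` for `1 ≤ j ≤ N` and `x̂_j = x_{2N+1-j}⁻¹` for
`N+1 ≤ j ≤ 2N`. -/
noncomputable def xHat (N : ℕ) (j : ℕ) : FoldField N :=
  if j ≤ N then xVar N j else (xVar N (2 * N + 1 - j))⁻¹

/-- The index `ι(i, ε)`: `ι(i, +1) = i` and `ι(i, -1) = 2N+1-i`. -/
def iota (N : ℕ) (i : ℕ) (ε : ℤ) : ℕ :=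
  if ε = 1 then i else 2 * N + 1 - i

open Finset

section Reflection

variable {M : Type*} [CommMonoid M]

theorem prod_Icc_two_mul_eq_prod_mul_reflect (g : ℕ → M) (N : ℕ) :
    ∏ j ∈ Icc 1 (2 * N), g j = ∏ j ∈ Icc 1 N, g j * g (2 * N + 1 - j) := by
  have hreflect : ∏ j ∈ Ico 1 (N + 1), g (2 * N + 1 - j) = ∏ j ∈ Ico (N + 1) (2 * N + 1), g j := by
    rw [prod_Ico_reflect g 1 (by omega)]
    congr 2; omega
  rw [prod_mul_distrib, ← Ico_add_one_right_eq_Icc, ← Ico_add_one_right_eq_Icc, hreflect,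
    prod_Ico_consecutive g (by omega) (by omega)]

theorem prod_Icc_two_mul_erase {N i k : ℕ} (g : ℕ → M) (hi : i ∈ Icc 1 N)
    (hk : k = i ∨ k = 2 * N + 1 - i) :
    ∏ j ∈ (Icc 1 (2 * N)).erase k, g j =
      g (2 * N + 1 - k) * ∏ j ∈ (Icc 1 N).erase i, g j * g (2 * N + 1 - j) := by
  rw [mem_Icc] at hi
  -- `g k` is replaced by `1` rather than cancelled: in the application it is `0 / 0 = 0`.
  set g' := Function.update g k 1
  have hk_mem : k ∈ Icc 1 (2 * N) := by rw [mem_Icc]; omega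
  have hpair : g' i * g' (2 * N + 1 - i) = g (2 * N + 1 - k) := by
    rcases hk with rfl | rfl
    · simp [g', Function.update_of_ne (show 2 * N + 1 - k ≠ k by omega)]
    · simp [g', Function.update_of_ne (show i ≠ 2 * N + 1 - i by omega),
        show 2 * N + 1 - (2 * N + 1 - i) = i by omega]
  have hrest : ∀ j ∈ (Icc 1 N).erase i, g' j * g' (2 * N + 1 - j) = g j * g (2 * N + 1 - j) := by
    intro j hj
    rw [mem_erase, mem_Icc] at hj
    simp only [g', Function.update_of_ne (show j ≠ k by omega),
      Function.update_of_ne (show 2 * N + 1 - j ≠ k by omega)]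
  calc ∏ j ∈ (Icc 1 (2 * N)).erase k, g j = ∏ j ∈ Icc 1 (2 * N), g' j := by
        rw [prod_update_of_mem hk_mem, one_mul, sdiff_singleton_eq_erase]
    _ = g (2 * N + 1 - k) * ∏ j ∈ (Icc 1 N).erase i, g j * g (2 * N + 1 - j) := by
        rw [prod_Icc_two_mul_eq_prod_mul_reflect, ← mul_prod_erase _ _ (mem_Icc.mpr hi), hpair,
          prod_congr rfl hrest]

end Reflection

theorem mul_sub_inv_div_sub_inv {F : Type*} [Field F] (t y : F) {z : F} (hz : z ≠ 0) :
    (t * y - z⁻¹) / (y - z⁻¹) = (1 - t * y * z) / (1 - y * z) := by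
  rw [← mul_div_mul_right _ _ (neg_ne_zero.mpr hz)]
  congr 1 <;> field_simp <;> ring

theorem xVar_ne_zero (N j : ℕ) : xVar N j ≠ 0 :=
  (map_ne_zero_iff _ (IsFractionRing.injective (MvPolynomial (Fin (N + 1)) ℚ) (FoldField N))).mpr
    (MvPolynomial.X_ne_zero _)

theorem xHat_of_le {N j : ℕ} (hj : j ≤ N) : xHat N j = xVar N j := if_pos hj

theorem xHat_reflect {N k : ℕ} (hk : k ∈ Icc 1 (2 * N)) :
    xHat N (2 * N + 1 - k) = (xHat N k)⁻¹ := by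
  rw [mem_Icc] at hk
  unfold xHat
  by_cases hkN : k ≤ N
  · rw [if_neg (by omega), if_pos hkN, Nat.sub_sub_self (by omega)]
  · rw [if_pos (by omega), if_neg hkN, inv_inv]

theorem xHat_iota {N i : ℕ} {ε : ℤ} (hi : i ≤ N) (hε : ε = 1 ∨ ε = -1) :
    xHat N (iota N i ε) = xVar N i ^ ε := by
  rcases hε with rfl | rfl
  · simp [iota, xHat_of_le hi]
  · rw [iota, if_neg (by norm_num), zpow_neg_one, xHat, if_neg (by omega),
      Nat.sub_sub_self (by omega)]

theorem iota_eq_or {N i : ℕ} (ε : ℤ) : iota N i ε = i ∨ iota N i ε = 2 * N + 1 - i := by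
  unfold iota; split_ifs <;> simp

theorem folding_identity_general (N : ℕ) (i : ℕ) (hi : i ∈ Finset.Icc 1 N)
    (ε : ℤ) (hε : ε = 1 ∨ ε = -1) :
    ∏ j ∈ (Finset.Icc 1 (2 * N)).erase (iota N i ε),
        (tVar N * xHat N (iota N i ε) - xHat N j) / (xHat N (iota N i ε) - xHat N j) =
      ((1 - tVar N * xVar N i ^ (2 * ε)) / (1 - xVar N i ^ (2 * ε))) *
        ∏ j ∈ (Finset.Icc 1 N).erase i,
          ((1 - tVar N * xVar N i ^ ε * xVar N j) / (1 - xVar N i ^ ε * xVar N j)) *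
            ((tVar N * xVar N i ^ ε - xVar N j) / (xVar N i ^ ε - xVar N j)) := by
  have hι_mem : iota N i ε ∈ Icc 1 (2 * N) := by
    rw [mem_Icc] at hi ⊢; rcases iota_eq_or (N := N) (i := i) ε with h | h <;> omega
  have hsq : xVar N i ^ (2 * ε) = xVar N i ^ ε * xVar N i ^ ε := by
    rw [mul_comm, zpow_mul, zpow_two]
  rw [prod_Icc_two_mul_erase _ hi (iota_eq_or ε), xHat_reflect hι_mem,
    xHat_iota (mem_Icc.mp hi).2 hε,
    mul_sub_inv_div_sub_inv _ _ (zpow_ne_zero ε (xVar_ne_zero N i)), hsq, mul_assoc]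
  congr 1
  refine prod_congr rfl fun j hj => ?_
  obtain ⟨hj1, hjN⟩ := mem_Icc.mp (mem_of_mem_erase hj)
  rw [xHat_reflect (mem_Icc.mpr ⟨hj1, by omega⟩), xHat_of_le hjN,
    mul_sub_inv_div_sub_inv _ _ (xVar_ne_zero N j), mul_comm]

/-- The folding specialization `x_{2N+1-i} = x_i⁻¹`, `Γ_{2N+1-i} = Γ_i⁻¹` maps the first
Macdonald operator of type `A_{2N-1}^{(1)}` to the first Macdonald operator of type
`A_{2N-1}^{(2)}`: for `i ∈ {1,…,N}` and `ε ∈ {+1, -1}`,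
`∏_{j ∈ {1,…,2N} \ {ι(i,ε)}} (t x̂_{ι(i,ε)} - x̂_j)/(x̂_{ι(i,ε)} - x̂_j)
  = [(1 - t x_i^{2ε})/(1 - x_i^{2ε})]
    ∏_{j≠i, 1≤j≤N} [(1 - t x_i^ε x_j)/(1 - x_i^ε x_j)]·[(t x_i^ε - x_j)/(x_i^ε - x_j)]`. -/
theorem folding_identity (N : ℕ) (hN : 1 ≤ N) (i : ℕ) (hi : i ∈ Finset.Icc 1 N)
    (ε : ℤ) (hε : ε = 1 ∨ ε = -1) :
    ∏ j ∈ (Finset.Icc 1 (2 * N)).erase (iota N i ε),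
        (tVar N * xHat N (iota N i ε) - xHat N j) / (xHat N (iota N i ε) - xHat N j) =
      ((1 - tVar N * xVar N i ^ (2 * ε)) / (1 - xVar N i ^ (2 * ε))) *
        ∏ j ∈ (Finset.Icc 1 N).erase i,
          ((1 - tVar N * xVar N i ^ ε * xVar N j) / (1 - xVar N i ^ ε * xVar N j)) *
            ((tVar N * xVar N i ^ ε - xVar N j) / (xVar N i ^ ε - xVar N j)) :=
  folding_identity_general N i hi ε hε
end
end

section
/- Let N ≥ 1, let Λ_1,…,Λ_N ∈ ℂ∖{0}, let ξ ≥ 0 be a real number, and let 1 ≤ m ≤ N, with the additional restriction m ≤ N − 2 in the case ξ = 0. For real t > 0 set s_i(t) := Λ_i t^{N+ξ−i} (real powers of t). Then as t → +∞, t^{−( m(N+ξ) − m(m+1)/2 )} · ê_m( s_1(t), …, s_N(t) ) tends to Λ_1 Λ_2 ⋯ Λ_m. (This computes the q-Whittaker limit of the eigenvalues of the 𝔤-Macdonald operators: with s = q^{λ} t^{ρ(𝔤)} and Λ_i = q^{λ_i}, the limit t^{−m(N+ξ_𝔤 − (m+1)/2)} ê_m(s) equals the dominant monomial Λ^{ω_m}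 = q^{λ_1 + ⋯ + λ_m}, where ξ_𝔤 ∈ {0, 1/2, 1} is the parameter of the specialization.) -/
open scoped BigOperators Topology
open Filter

noncomputable section

/-- The BC-type elementary symmetric function `ê_m` of a family of (nonzero) complex
numbers: `ê_m = ∑_{S, T ⊆ s, |S| + |T| = m} (∏_{i∈S} z_i)(∏_{i∈T} z_i⁻¹)`,
equivalently the coefficient of `z^m` in `∏_{i∈s} (1 + z z_i)(1 + z z_i⁻¹)`. -/
noncomputable def ehatC (m : ℕ) (s : Finset ℕ) (z : ℕ → ℂ) : ℂ :=
  ∑ p ∈ (s.powerset ×ˢ s.powerset).filter (fun p => p.1.card + p.2.card = m),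
    (∏ i ∈ p.1, z i) * ∏ i ∈ p.2, (z i)⁻¹

/-!
Each term of `ê_m(s(t))` indexed by `(S, T)` is a constant times `t ^ e(S, T)` with
`e(S, T) = ∑_{i∈S} (N + ξ - i) - ∑_{i∈T} (N + ξ - i)`. The pair `({1,…,m}, ∅)` is the unique
maximiser of `e`, with value `m(N + ξ) - m(m + 1)/2`: a set `S` of positive integers has sum at
least `1 + ⋯ + |S|`, with equality only for `S = {1,…,|S|}`, and a nonempty `T` lowers the
exponent by at least `|T| (N + 2ξ - m) > 0`. After rescaling, every other term tends to `0`.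
-/

open Finset

def ehatIndex (m : ℕ) (s : Finset ℕ) : Finset (Finset ℕ × Finset ℕ) :=
  (s.powerset ×ˢ s.powerset).filter (fun p => p.1.card + p.2.card = m)

lemma mem_ehatIndex {m : ℕ} {s : Finset ℕ} {p : Finset ℕ × Finset ℕ} :
    p ∈ ehatIndex m s ↔ p.1 ⊆ s ∧ p.2 ⊆ s ∧ #p.1 + #p.2 = m := by
  simp [ehatIndex, and_assoc]

section
variable {M : Type*} [CommGroupWithZero M]

def ehatMonomial (z : ℕ → M) (p : Finset ℕ × Finset ℕ) : M :=
  (∏ i ∈ p.1, z i) * ∏ i ∈ p.2, (z i)⁻¹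

lemma ehatC_eq_sum_ehatMonomial (m : ℕ) (s : Finset ℕ) (z : ℕ → ℂ) :
    ehatC m s z = ∑ p ∈ ehatIndex m s, ehatMonomial z p := rfl

lemma ehatMonomial_mul (z w : ℕ → M) (p : Finset ℕ × Finset ℕ) :
    ehatMonomial (fun i => z i * w i) p = ehatMonomial z p * ehatMonomial w p := by
  simp only [ehatMonomial, prod_mul_distrib, mul_inv, mul_mul_mul_comm]

end

def ehatExponent (a : ℕ → ℝ) (p : Finset ℕ × Finset ℕ) : ℝ :=
  ∑ i ∈ p.1, a i - ∑ i ∈ p.2, a i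

lemma ehatMonomial_rpow {t : ℝ} (ht : 0 < t) (a : ℕ → ℝ) (p : Finset ℕ × Finset ℕ) :
    ehatMonomial (fun i => t ^ a i) p = t ^ ehatExponent a p := by
  rw [ehatMonomial, ehatExponent, Real.rpow_sub ht, Real.rpow_sum_of_pos ht,
    Real.rpow_sum_of_pos ht, prod_inv_distrib, div_eq_mul_inv]

lemma ehatC_mul_rpow {t : ℝ} (ht : 0 < t) (m : ℕ) (s : Finset ℕ) (Λ : ℕ → ℂ) (a : ℕ → ℝ) :
    ehatC m s (fun i => Λ i * ((t ^ a i : ℝ) : ℂ)) =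
      ∑ p ∈ ehatIndex m s, (t ^ ehatExponent a p) • ehatMonomial Λ p := by
  rw [ehatC_eq_sum_ehatMonomial]
  refine sum_congr rfl fun p _ => ?_
  rw [ehatMonomial_mul, ← ehatMonomial_rpow ht, Complex.real_smul, mul_comm]
  simp [ehatMonomial]

lemma sum_Icc_natCast_mul_two {R : Type*} [CommSemiring R] (n : ℕ) :
    (∑ i ∈ Icc 1 n, (i : R)) * 2 = n * (n + 1) := by
  induction n with
  | zero => simp
  | succ n ih =>
    rw [sum_Icc_succ_top (by omega), add_mul, ih]
    push_cast
    ring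

lemma sum_Icc_card_add_card_sdiff_le {S : Finset ℕ} (hS : 0 ∉ S) :
    ∑ i ∈ Icc 1 #S, i + #(S \ Icc 1 #S) ≤ ∑ i ∈ S, i := by
  set I := Icc 1 #S
  -- `I \ S` and `S \ I` have the same size, but the elements of the first are `≤ #S` and those
  -- of the second are `> #S`.
  have hcard : #(I \ S) = #(S \ I) := by
    have hI : #I = #S := by simp [I]
    have := card_sdiff_add_card_inter I S
    have := card_sdiff_add_card_inter S I
    rw [inter_comm S I] at this
    omega
  have hlow : ∑ i ∈ I \ S, i ≤ #(I \ S) * #S := by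
    simpa using sum_le_card_nsmul (I \ S) (fun i => i) #S
      fun i hi => (mem_Icc.mp (mem_sdiff.mp hi).1).2
  have hhigh : #(S \ I) * (#S + 1) ≤ ∑ i ∈ S \ I, i := by
    simpa using card_nsmul_le_sum (S \ I) (fun i => i) (#S + 1) fun i hi => by
      obtain ⟨hiS, hiI⟩ := mem_sdiff.mp hi
      have : i ≠ 0 := fun h => hS (h ▸ hiS)
      simp only [I, mem_Icc, not_and_or, not_le] at hiI
      omega
  rw [hcard] at hlow
  rw [← sum_inter_add_sum_sdiff I S, ← sum_inter_add_sum_sdiff S I, inter_comm]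
  linarith

lemma ehatExponent_sub_natCast (c : ℝ) (U V : Finset ℕ) :
    ehatExponent (fun i => c - i) (U, V) =
      (#U - #V) * c - (∑ i ∈ U, (i : ℝ) - ∑ i ∈ V, (i : ℝ)) := by
  simp only [ehatExponent, sum_sub_distrib, sum_const, nsmul_eq_mul]
  ring

lemma ehatExponent_lt {c : ℝ} {N m : ℕ} (hm : (m : ℝ) < 2 * c - N)
    {p : Finset ℕ × Finset ℕ} (hp : p ∈ ehatIndex m (Icc 1 N)) (hne : p ≠ (Icc 1 m, ∅)) :
    ehatExponent (fun i => c - i) p < ehatExponent (fun i => c - i) (Icc 1 m, ∅) := by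
  obtain ⟨S, T⟩ := p
  obtain ⟨hS, hT, hcard⟩ := mem_ehatIndex.mp hp
  dsimp only at hS hT hcard
  have hSsum := sum_Icc_card_add_card_sdiff_le fun h => by simpa using hS h
  rcases T.eq_empty_or_nonempty with rfl | hT0
  · rw [card_empty, add_zero] at hcard
    have hSI : (S \ Icc 1 #S).Nonempty := sdiff_nonempty.mpr fun hsub =>
      hne (by rw [eq_of_subset_of_card_le hsub (by simp), hcard])
    have hlt : ∑ i ∈ Icc 1 m, (i : ℝ) < ∑ i ∈ S, (i : ℝ) := by
      rw [← hcard, ← Nat.cast_sum, ← Nat.cast_sum]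
      exact_mod_cast (Nat.lt_add_of_pos_right hSI.card_pos).trans_le hSsum
    simp only [ehatExponent_sub_natCast, Nat.card_Icc, add_tsub_cancel_right, card_empty,
      sum_empty, hcard]
    linarith
  · have hTsum : ∑ i ∈ T, (i : ℝ) ≤ #T * N := by
      simpa using sum_le_card_nsmul T (fun i => (i : ℝ)) N
        fun i hi => by exact_mod_cast (mem_Icc.mp (hT hi)).2
    have hSsum' : ∑ i ∈ Icc 1 #S, (i : ℝ) ≤ ∑ i ∈ S, (i : ℝ) := by
      rw [← Nat.cast_sum, ← Nat.cast_sum]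
      exact_mod_cast (Nat.le_add_right _ _).trans hSsum
    have hT1 : (1 : ℝ) ≤ #T := by exact_mod_cast hT0.card_pos
    have hm' : (#S : ℝ) + #T = m := by exact_mod_cast hcard
    simp only [ehatExponent_sub_natCast, Nat.card_Icc, add_tsub_cancel_right, card_empty,
      sum_empty, Nat.cast_zero, sub_zero]
    nlinarith [sum_Icc_natCast_mul_two (R := ℝ) #S, sum_Icc_natCast_mul_two (R := ℝ) m]

theorem tendsto_sum_rpow_sub_smul {ι E : Type*} [NormedAddCommGroup E] [NormedSpace ℝ E]
    (s : Finset ι) (e : ι → ℝ) (v : ι → E) {i₀ : ι} (hi₀ : i₀ ∈ s)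
    (he : ∀ i ∈ s, i ≠ i₀ → e i < e i₀) :
    Tendsto (fun t : ℝ => ∑ i ∈ s, t ^ (e i - e i₀) • v i) atTop (𝓝 (v i₀)) := by
  classical
  have hlim : ∑ i ∈ s, (if i = i₀ then v i else 0) = v i₀ := by simp [hi₀]
  rw [← hlim]
  refine tendsto_finsetSum s fun i hi => ?_
  split_ifs with h
  · subst h
    simp
  · have : Tendsto (fun t : ℝ => t ^ (e i - e i₀)) atTop (𝓝 0) := by
      simpa using tendsto_rpow_neg_atTop (y := e i₀ - e i) (by linarith [he i hi h])
    simpa using this.smul_const (v i)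

theorem ehat_whittaker_limit_general (N : ℕ) (ξ : ℝ) (hξ : 0 ≤ ξ)
    (Λ : ℕ → ℂ)
    (m : ℕ) (hm1 : 1 ≤ m) (hmN : m ≤ N) (hm0 : ξ = 0 → m ≤ N - 2) :
    Tendsto (fun t : ℝ =>
        ((t ^ (-((m : ℝ) * ((N : ℝ) + ξ) - (m : ℝ) * ((m : ℝ) + 1) / 2)) : ℝ) : ℂ) *
          ehatC m (Finset.Icc 1 N)
            (fun i => Λ i * ((t ^ ((N : ℝ) + ξ - (i : ℝ)) : ℝ) : ℂ)))
      atTop (𝓝 (∏ i ∈ Finset.Icc 1 m, Λ i)) := by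
  have hm : (m : ℝ) < 2 * (N + ξ) - N := by
    rcases hξ.eq_or_lt with rfl | hξ
    · have := hm0 rfl
      have : (m : ℝ) + 2 ≤ N := by exact_mod_cast (by omega : m + 2 ≤ N)
      linarith
    · have : (m : ℝ) ≤ N := by exact_mod_cast hmN
      linarith
  have hmain : (Icc 1 m, ∅) ∈ ehatIndex m (Icc 1 N) :=
    mem_ehatIndex.mpr ⟨Icc_subset_Icc_right hmN, empty_subset _, by simp⟩
  have hE : ehatExponent (fun i => (N + ξ : ℝ) - i) (Icc 1 m, ∅) =
      m * (N + ξ) - m * (m + 1) / 2 := by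
    simp only [ehatExponent_sub_natCast, Nat.card_Icc, add_tsub_cancel_right, card_empty,
      sum_empty, Nat.cast_zero, sub_zero]
    linarith [sum_Icc_natCast_mul_two (R := ℝ) m]
  have hmono : ehatMonomial Λ (Icc 1 m, ∅) = ∏ i ∈ Icc 1 m, Λ i := by simp [ehatMonomial]
  rw [← hmono]
  refine (tendsto_sum_rpow_sub_smul _ (ehatExponent fun i => (N + ξ : ℝ) - i) _ hmain
    fun p hp hne => ehatExponent_lt hm hp hne).congr' ?_
  filter_upwards [eventually_gt_atTop 0] with t ht
  rw [ehatC_mul_rpow ht, mul_sum, ← hE]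
  refine sum_congr rfl fun p _ => ?_
  rw [Complex.real_smul, Complex.real_smul, ← mul_assoc, ← Complex.ofReal_mul,
    ← Real.rpow_add ht, neg_add_eq_sub]

/-- The q-Whittaker limit of the eigenvalues of the 𝔤-Macdonald operators: with
`s_i(t) = Λ_i t^{N+ξ-i}`, for `1 ≤ m ≤ N` (and `m ≤ N-2` when `ξ = 0`),
`t^{-(m(N+ξ) - m(m+1)/2)} ê_m(s_1(t),…,s_N(t)) → Λ_1 Λ_2 ⋯ Λ_m` as `t → +∞`. -/
theorem ehat_whittaker_limit (N : ℕ) (hN : 1 ≤ N) (ξ : ℝ) (hξ : 0 ≤ ξ)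
    (Λ : ℕ → ℂ) (hΛ : ∀ i ∈ Finset.Icc 1 N, Λ i ≠ 0)
    (m : ℕ) (hm1 : 1 ≤ m) (hmN : m ≤ N) (hm0 : ξ = 0 → m ≤ N - 2) :
    Tendsto (fun t : ℝ =>
        ((t ^ (-((m : ℝ) * ((N : ℝ) + ξ) - (m : ℝ) * ((m : ℝ) + 1) / 2)) : ℝ) : ℂ) *
          ehatC m (Finset.Icc 1 N)
            (fun i => Λ i * ((t ^ ((N : ℝ) + ξ - (i : ℝ)) : ℝ) : ℂ)))
      atTop (𝓝 (∏ i ∈ Finset.Icc 1 m, Λ i)) :=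
  ehat_whittaker_limit_general N ξ hξ Λ m hm1 hmN hm0
end
end

section
/- Let N ≥ 1, q ∈ ℂ∖{0} and Λ_1,…,Λ_N ∈ ℂ∖{0}. For every subset I ⊆ {1,…,N}, as the real parameter t → +∞ the product ∏ over pairs (i,j) with i ∈ I, j ∉ I and j < i of [ (t^{i−j−1} Λ_j − Λ_i)/(t^{i−j} Λ_j − Λ_i) ] · [ (t^{i−j+1} Λ_j − q Λ_i)/(t^{i−j} Λ_j − q Λ_i) ] tends to ∏_{i ∈ I, i ≥ 2, i−1 ∉ I} (1 − Λ_i/Λ_{i−1}). Consequently the type-A Pieri operators 𝓗_a(Λ; q, t) = Σ_{I ⊆ {1,…,N}, |I| = a} ( ∏_{i∈I, j∉I, j<i} [(t^{i−j−1}Λ_j − Λ_i)/(t^{i−j}Λ_j − Λ_i)]·[(t^{i−j+1}Λ_j − qΛ_i)/(t^{i−j}Λ_j − qΛ_i)] ) ∏_{i∈I} T_i converge coefficientwise as t → ∞ to the relativistic q-difference Toda Hamiltonians H_a(Λ; q) = Σ_{|I| = a} ∏_{i∈I, i−1∉I} (1 − Λ_i/Λ_{i−1}) ∏_{i∈I}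 T_i of type A_{N−1}^{(1)}, with the convention Λ_0 = ∞ (i.e. the factor corresponding to i = 1 equals 1). -/
/-!
After dividing numerators and denominators by the leading powers of `t`, the factor indexed by
`(i, j)` with `k = i - j ≥ 1` becomes
`(Λ_j - t^{1-k} Λ_i)(Λ_j - t^{-k-1} q Λ_i) / ((Λ_j - t^{-k} Λ_i)(Λ_j - t^{-k} q Λ_i))`,
which tends to `1 - Λ_i / Λ_j` when `k = 1` (the only case where a power `t^0` survives) and to
`1` otherwise. Hence only the pairs `j = i - 1 ∉ I` contribute to the limit of the product.
-/

open scoped BigOperators Topology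
open Filter

lemma Complex.tendsto_ofReal_zpow_atTop_of_nonpos {n : ℤ} (hn : n ≤ 0) :
    Tendsto (fun t : ℝ => (t : ℂ) ^ n) atTop (𝓝 (if n = 0 then 1 else 0)) := by
  rcases hn.eq_or_lt with rfl | hneg
  · simp
  · simpa [hneg.ne, Complex.ofReal_zpow] using (tendsto_zpow_atTop_zero hneg).ofReal

lemma zpow_mul_sub_eq {K : Type*} [DivisionRing K] {x : K} (hx : x ≠ 0) (n : ℤ) (b c : K) :
    x ^ n * b - c = x ^ n * (b - x ^ (-n) * c) := by
  rw [mul_sub, ← mul_assoc, ← zpow_add₀ hx, add_neg_cancel, zpow_zero, one_mul]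

lemma pieri_factor_eq {K : Type*} [Field K] {x : K} (hx : x ≠ 0) (k : ℤ) (q a b : K) :
    (x ^ (k - 1) * b - a) / (x ^ k * b - a) * ((x ^ (k + 1) * b - q * a) / (x ^ k * b - q * a)) =
      (b - x ^ (-(k - 1)) * a) * (b - x ^ (-(k + 1)) * (q * a)) /
        ((b - x ^ (-k) * a) * (b - x ^ (-k) * (q * a))) := by
  have hcancel : x ^ (k - 1) * x ^ (k + 1) = x ^ k * x ^ k := by
    rw [← zpow_add₀ hx, ← zpow_add₀ hx]; ring_nf
  simp only [zpow_mul_sub_eq hx, div_mul_div_comm, mul_mul_mul_comm _ (b - _), hcancel]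
  exact mul_div_mul_left _ _ (mul_ne_zero (zpow_ne_zero _ hx) (zpow_ne_zero _ hx))

lemma tendsto_pieri_factor_atTop (q a b : ℂ) (hb : b ≠ 0) {k : ℤ} (hk : 1 ≤ k) :
    Tendsto (fun t : ℝ =>
        (((t : ℂ) ^ (k - 1) * b - a) / ((t : ℂ) ^ k * b - a)) *
          (((t : ℂ) ^ (k + 1) * b - q * a) / ((t : ℂ) ^ k * b - q * a)))
      atTop (𝓝 (if k = 1 then 1 - a / b else 1)) := by
  have hpow : ∀ n : ℤ, n < 0 → Tendsto (fun t : ℝ => (t : ℂ) ^ n) atTop (𝓝 0) := fun n hn => by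
    simpa [hn.ne] using Complex.tendsto_ofReal_zpow_atTop_of_nonpos hn.le
  have hlim : Tendsto (fun t : ℝ =>
      (b - (t : ℂ) ^ (-(k - 1)) * a) * (b - (t : ℂ) ^ (-(k + 1)) * (q * a)) /
        ((b - (t : ℂ) ^ (-k) * a) * (b - (t : ℂ) ^ (-k) * (q * a)))) atTop
      (𝓝 ((b - (if -(k - 1) = 0 then 1 else 0) * a) * (b - 0 * (q * a)) /
        ((b - 0 * a) * (b - 0 * (q * a))))) := by
    refine Tendsto.div (Tendsto.mul ?_ ?_) (Tendsto.mul ?_ ?_) (by simp [hb])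
    · exact tendsto_const_nhds.sub
        ((Complex.tendsto_ofReal_zpow_atTop_of_nonpos (by omega)).mul tendsto_const_nhds)
    all_goals exact tendsto_const_nhds.sub ((hpow _ (by omega)).mul tendsto_const_nhds)
  have hvalue : (b - (if -(k - 1) = 0 then 1 else 0) * a) * (b - 0 * (q * a)) /
      ((b - 0 * a) * (b - 0 * (q * a))) = if k = 1 then 1 - a / b else 1 := by
    by_cases h : k = 1
    · subst h
      simp [mul_div_mul_right _ _ hb, sub_div, hb]
    · simp [h, show 1 - k ≠ 0 by omega, hb]
  rw [← hvalue]
  refine hlim.congr' ?_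
  filter_upwards [eventually_ne_atTop (0 : ℝ)] with t ht
  exact (pieri_factor_eq (Complex.ofReal_ne_zero.2 ht) k q a b).symm

lemma Finset.prod_filter_notMem_Ico_ite_succ_eq {M : Type*} [CommMonoid M] (I : Finset ℕ)
    (f : ℕ → M) (i : ℕ) :
    ∏ j ∈ (Finset.Ico 1 i).filter (fun j => j ∉ I), (if j + 1 = i then f j else 1) =
      if 2 ≤ i ∧ i - 1 ∉ I then f (i - 1) else 1 := by
  have hcond : ∀ j, (j + 1 = i) = (i - 1 = j ∧ 1 ≤ i) := fun j => propext (by omega)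
  simp only [hcond, ite_and, Finset.prod_ite_eq, Finset.mem_filter, Finset.mem_Ico]
  split_ifs <;> first | rfl | omega

theorem pieri_whittaker_limit_A_general (N : ℕ) (q : ℂ)
    (Λ : ℕ → ℂ) (hΛ : ∀ i ∈ Finset.Icc 1 N, Λ i ≠ 0)
    (I : Finset ℕ) (hI : I ⊆ Finset.Icc 1 N) :
    Tendsto (fun t : ℝ =>
        ∏ i ∈ I, ∏ j ∈ (Finset.Ico 1 i).filter (fun j => j ∉ I),
          (((t : ℂ) ^ ((i : ℤ) - (j : ℤ) - 1) * Λ j - Λ i) /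
              ((t : ℂ) ^ ((i : ℤ) - (j : ℤ)) * Λ j - Λ i)) *
            (((t : ℂ) ^ ((i : ℤ) - (j : ℤ) + 1) * Λ j - q * Λ i) /
              ((t : ℂ) ^ ((i : ℤ) - (j : ℤ)) * Λ j - q * Λ i)))
      atTop
      (𝓝 (∏ i ∈ I.filter (fun i => 2 ≤ i ∧ i - 1 ∉ I), (1 - Λ i / Λ (i - 1)))) := by
  have hfactor : ∀ i ∈ I, ∀ j ∈ (Finset.Ico 1 i).filter (fun j => j ∉ I),
      Tendsto (fun t : ℝ =>
        (((t : ℂ) ^ ((i : ℤ) - (j : ℤ) - 1) * Λ j - Λ i) /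
            ((t : ℂ) ^ ((i : ℤ) - (j : ℤ)) * Λ j - Λ i)) *
          (((t : ℂ) ^ ((i : ℤ) - (j : ℤ) + 1) * Λ j - q * Λ i) /
            ((t : ℂ) ^ ((i : ℤ) - (j : ℤ)) * Λ j - q * Λ i)))
        atTop (𝓝 (if j + 1 = i then 1 - Λ i / Λ j else 1)) := by
    intro i hi j hj
    obtain ⟨⟨hj1, hji⟩, -⟩ := by simpa only [Finset.mem_filter, Finset.mem_Ico] using hj
    have hiN := (Finset.mem_Icc.1 (hI hi)).2
    have hgap : ((i : ℤ) - j = 1) = (j + 1 = i) := propext (by omega)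
    simpa only [hgap] using tendsto_pieri_factor_atTop q (Λ i) (Λ j)
      (hΛ j (Finset.mem_Icc.2 ⟨hj1, by omega⟩)) (k := (i : ℤ) - j) (by omega)
  have hlim := tendsto_finsetProd I fun i hi => tendsto_finsetProd _ (hfactor i hi)
  rwa [Finset.prod_congr rfl fun i _ => Finset.prod_filter_notMem_Ico_ite_succ_eq I
    (fun j => 1 - Λ i / Λ j) i, ← Finset.prod_filter] at hlim

/-- The q-Whittaker limit of the type-A Pieri operators: for every subset
`I ⊆ {1,…,N}`, the coefficient of `∏_{i∈I} T_i` in the Pieri operator `𝓗_a(Λ; q, t)`,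
namely
`∏_{i∈I, j∉I, j<i} [(t^{i-j-1} Λ_j - Λ_i)/(t^{i-j} Λ_j - Λ_i)] ·
  [(t^{i-j+1} Λ_j - q Λ_i)/(t^{i-j} Λ_j - q Λ_i)]`,
tends as `t → +∞` to `∏_{i∈I, 2≤i, i-1∉I} (1 - Λ_i/Λ_{i-1})` (the convention `Λ_0 = ∞`
making the factor for `i = 1` equal to `1`).  Consequently the Pieri operators
`𝓗_a(Λ; q, t)` converge coefficientwise to the relativistic q-difference Toda
Hamiltonians `H_a(Λ; q) = ∑_{|I|=a} ∏_{i∈I, i-1∉I} (1 - Λ_i/Λ_{i-1}) ∏_{i∈I} T_i`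
of type `A_{N-1}^{(1)}`. -/
theorem pieri_whittaker_limit_A (N : ℕ) (hN : 1 ≤ N) (q : ℂ) (hq : q ≠ 0)
    (Λ : ℕ → ℂ) (hΛ : ∀ i ∈ Finset.Icc 1 N, Λ i ≠ 0)
    (I : Finset ℕ) (hI : I ⊆ Finset.Icc 1 N) :
    Tendsto (fun t : ℝ =>
        ∏ i ∈ I, ∏ j ∈ (Finset.Ico 1 i).filter (fun j => j ∉ I),
          (((t : ℂ) ^ ((i : ℤ) - (j : ℤ) - 1) * Λ j - Λ i) /
              ((t : ℂ) ^ ((i : ℤ) - (j : ℤ)) * Λ j - Λ i)) *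
            (((t : ℂ) ^ ((i : ℤ) - (j : ℤ) + 1) * Λ j - q * Λ i) /
              ((t : ℂ) ^ ((i : ℤ) - (j : ℤ)) * Λ j - q * Λ i)))
      atTop
      (𝓝 (∏ i ∈ I.filter (fun i => 2 ≤ i ∧ i - 1 ∉ I), (1 - Λ i / Λ (i - 1)))) :=
  pieri_whittaker_limit_A_general N q Λ hΛ I hI
end
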